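/- arXiv:1907.13481 — 9 statements merged into one kernel-verified Lean document; each statement's English description precedes it below -/
import Mathlib

section
/- Let G be a connected graph with a cut vertex u, and let G_1, G_2 be connected subgraphs with G = G_1 ∪ G_2 and V(G_1) ∩ V(G_2) = {u}. Then W(G) = W(G_1) + W(G_2) + (|V(G_1)|-1)·D_{G_2}(u) + (|V(G_2)|-1)·D_{G_1}(u). -/
/-!
Every walk from `A` to `V \ A` passes through the cut vertex `u`, so `d(x, y) = d(x, u) + d(u, y)`
for `x ∈ A`, `y ∈ B`; and collapsing `V \ A` onto `u` does not increase distances, so distances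
between vertices of `A` are the same in `G` and in `G[A]` (likewise for `B`). Splitting the double
sum of distances over `A × A`, `B × B` and the two mixed blocks then gives the formula.
-/

open Finset SimpleGraph

/-- The sum of distances from `u` to all vertices of `G`. -/
noncomputable def distSum {V : Type*} [Fintype V] (G : SimpleGraph V) (u : V) : ℕ :=
  ∑ v, G.dist u v

/-- The Wiener index of `G`: the sum of distances over all unordered pairs of vertices. -/
noncomputable def wienerIndex {V : Type*} [Fintype V] (G : SimpleGraph V) : ℕ :=
  (∑ u : V, ∑ v : V, G.dist u v) / 2

theorem Finset.even_sum_sum_of_symm {α : Type*} [DecidableEq α] (f : α → α → ℕ)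
    (hsymm : ∀ x y, f x y = f y x) (hdiag : ∀ x, f x x = 0) (s : Finset α) :
    Even (∑ x ∈ s, ∑ y ∈ s, f x y) := by
  induction s using Finset.induction_on with
  | empty => simp
  | @insert a s ha ih =>
    obtain ⟨k, hk⟩ := ih
    have hcol : ∑ x ∈ s, f x a = ∑ y ∈ s, f a y := sum_congr rfl fun x _ => hsymm x a
    refine ⟨∑ y ∈ s, f a y + k, ?_⟩
    simp only [sum_insert ha, hdiag, sum_add_distrib, hk, hcol]
    ring

theorem Finset.sum_sum_eq_of_cut {V : Type*} [Fintype V] [DecidableEq V] {d : V → V → ℕ}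
    {A B : Finset V} {u : V} (hU : A ∪ B = univ) (hI : A ∩ B = {u})
    (hsymm : ∀ x y, d x y = d y x) (hdiag : d u u = 0)
    (hcut : ∀ x ∈ A, ∀ y ∈ B, d x y = d x u + d u y) :
    ∑ x, ∑ y, d x y = ∑ x ∈ A, ∑ y ∈ A, d x y + ∑ x ∈ B, ∑ y ∈ B, d x y
      + 2 * ((A.card - 1) * ∑ y ∈ B, d u y + (B.card - 1) * ∑ y ∈ A, d u y) := by
  have hA : u ∈ A := (mem_inter.mp (hI ▸ mem_singleton_self u)).1
  have hB : u ∈ B := (mem_inter.mp (hI ▸ mem_singleton_self u)).2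
  have hsplit (g : V → ℕ) : ∑ x, g x + g u = ∑ x ∈ A, g x + ∑ x ∈ B, g x := by
    rw [← sum_union_inter, hU, hI, sum_singleton]
  have hrow (x : V) : ∑ y, d x y + d x u = ∑ y ∈ A, d x y + ∑ y ∈ B, d x y := hsplit (d x)
  have hAB : ∑ x ∈ A, ∑ y ∈ B, d x y = B.card * ∑ x ∈ A, d u x + A.card * ∑ y ∈ B, d u y := by
    rw [sum_congr rfl fun x hx => sum_congr rfl fun y hy => hcut x hx y hy]
    simp only [sum_add_distrib, sum_const, smul_eq_mul, mul_sum, hsymm _ u]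
  have hBA : ∑ x ∈ B, ∑ y ∈ A, d x y = A.card * ∑ x ∈ B, d u x + B.card * ∑ y ∈ A, d u y := by
    rw [sum_comm, add_comm (A.card * _), ← hAB]
    exact sum_congr rfl fun x _ => sum_congr rfl fun y _ => hsymm y x
  have hrows (s : Finset V) : ∑ x ∈ s, ∑ y, d x y + ∑ x ∈ s, d u x
      = ∑ x ∈ s, ∑ y ∈ A, d x y + ∑ x ∈ s, ∑ y ∈ B, d x y := by
    simp only [← sum_add_distrib, hsymm u, hrow]
  have hsum := hsplit fun x => ∑ y, d x y
  have hu := hrow u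
  have hrA := hrows A
  have hrB := hrows B
  obtain ⟨a, ha⟩ : ∃ a, A.card = a + 1 := Nat.exists_eq_add_one.mpr (card_pos.mpr ⟨u, hA⟩)
  obtain ⟨b, hb⟩ : ∃ b, B.card = b + 1 := Nat.exists_eq_add_one.mpr (card_pos.mpr ⟨u, hB⟩)
  rw [hAB, ha, hb] at hrA
  rw [hBA, ha, hb] at hrB
  rw [hdiag] at hu
  rw [ha, hb, Nat.add_sub_cancel, Nat.add_sub_cancel]
  linarith

namespace SimpleGraph

variable {V W : Type*} {G : SimpleGraph V} {H : SimpleGraph W}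

theorem Walk.exists_walk_length_le_of_adj_imp (f : V → W)
    (hf : ∀ x y, G.Adj x y → f x = f y ∨ H.Adj (f x) (f y)) :
    ∀ {x y : V} (p : G.Walk x y), ∃ q : H.Walk (f x) (f y), q.length ≤ p.length
  | _, _, .nil => ⟨.nil, le_rfl⟩
  | _, _, .cons h p => by
    obtain ⟨q, hq⟩ := exists_walk_length_le_of_adj_imp f hf p
    rcases hf _ _ h with heq | hadj
    · exact ⟨q.copy heq.symm rfl, by rw [Walk.length_copy, Walk.length_cons]; omega⟩
    · exact ⟨.cons hadj q, by simpa using hq⟩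

theorem Reachable.of_adj_imp (f : V → W) (hf : ∀ x y, G.Adj x y → f x = f y ∨ H.Adj (f x) (f y))
    {x y : V} (hxy : G.Reachable x y) : H.Reachable (f x) (f y) :=
  let ⟨p⟩ := hxy
  let ⟨q, _⟩ := p.exists_walk_length_le_of_adj_imp f hf
  q.reachable

theorem Reachable.dist_le_of_adj_imp (f : V → W)
    (hf : ∀ x y, G.Adj x y → f x = f y ∨ H.Adj (f x) (f y)) {x y : V} (hxy : G.Reachable x y) :
    H.dist (f x) (f y) ≤ G.dist x y := by
  obtain ⟨p, hp⟩ := hxy.exists_walk_length_eq_dist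
  obtain ⟨q, hq⟩ := p.exists_walk_length_le_of_adj_imp f hf
  exact (dist_le q).trans (hp ▸ hq)

section CutVertex

variable [DecidableEq V] {A B : Finset V} {u : V}

theorem mem_support_of_mem_of_notMem (hI : A ∩ B = {u})
    (hedge : ∀ x y, G.Adj x y → (x ∈ A ∧ y ∈ A) ∨ (x ∈ B ∧ y ∈ B))
    {x y : V} (p : G.Walk x y) (hx : x ∈ A) (hy : y ∉ A) : u ∈ p.support := by
  obtain ⟨d, hd, hfst, hsnd⟩ := p.exists_boundary_dart A hx hy
  have hfstB : d.fst ∈ B := ((hedge _ _ d.adj).resolve_left fun h => hsnd h.2).1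
  have hfstu : d.fst = u := by simpa [hI] using mem_inter.mpr ⟨hfst, hfstB⟩
  exact hfstu ▸ p.dart_fst_mem_support_of_mem_darts hd

theorem dist_eq_dist_add_dist_of_cut (hG : G.Connected) (hI : A ∩ B = {u})
    (hedge : ∀ x y, G.Adj x y → (x ∈ A ∧ y ∈ A) ∨ (x ∈ B ∧ y ∈ B))
    {x y : V} (hx : x ∈ A) (hy : y ∈ B) : G.dist x y = G.dist x u + G.dist u y := by
  by_cases hyA : y ∈ A
  · have hyu : y = u := by simpa [hI] using mem_inter.mpr ⟨hyA, hy⟩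
    simp [hyu]
  refine le_antisymm hG.dist_triangle ?_
  obtain ⟨p, hp⟩ := hG.exists_walk_length_eq_dist x y
  have hu := mem_support_of_mem_of_notMem hI hedge p hx hyA
  calc G.dist x u + G.dist u y
      ≤ (p.takeUntil u hu).length + (p.dropUntil u hu).length :=
        add_le_add (dist_le _) (dist_le _)
    _ = G.dist x y := by rw [← Walk.length_append, p.take_spec hu, hp]

def retractOfCut (hA : u ∈ A) (x : V) : (A : Set V) :=
  if hx : x ∈ A then ⟨x, hx⟩ else ⟨u, hA⟩

@[simp]
theorem retractOfCut_coe (hA : u ∈ A) (x : (A : Set V)) : retractOfCut hA x = x := by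
  simp [retractOfCut]

theorem retractOfCut_adj (hA : u ∈ A) (hI : A ∩ B = {u})
    (hedge : ∀ x y, G.Adj x y → (x ∈ A ∧ y ∈ A) ∨ (x ∈ B ∧ y ∈ B)) (x y : V) (h : G.Adj x y) :
    retractOfCut hA x = retractOfCut hA y
      ∨ (G.induce (A : Set V)).Adj (retractOfCut hA x) (retractOfCut hA y) := by
  have hcut {z : V} (hzA : z ∈ A) (hzB : z ∈ B) : z = u := by
    simpa [hI] using mem_inter.mpr ⟨hzA, hzB⟩
  unfold retractOfCut
  by_cases hx : x ∈ A <;> by_cases hy : y ∈ A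
  · simp [hx, hy, h]
  · have hxu := hcut hx ((hedge x y h).resolve_left fun h' => hy h'.2).1
    simp [hy, hxu]
  · have hyu := hcut hy ((hedge x y h).resolve_left fun h' => hx h'.1).2
    simp [hx, hyu]
  · simp [hx, hy]

theorem dist_induce_of_cut (hG : G.Connected) (hA : u ∈ A) (hI : A ∩ B = {u})
    (hedge : ∀ x y, G.Adj x y → (x ∈ A ∧ y ∈ A) ∨ (x ∈ B ∧ y ∈ B)) (x y : (A : Set V)) :
    (G.induce (A : Set V)).dist x y = G.dist x y := by
  have hr := retractOfCut_adj hA hI hedge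
  have hreach : (G.induce (A : Set V)).Reachable x y := by
    simpa using (hG.preconnected x y).of_adj_imp (retractOfCut hA) hr
  refine le_antisymm ?_ (hreach.dist_le_of_adj_imp Subtype.val fun _ _ h => Or.inr h)
  simpa using (hG.preconnected x y).dist_le_of_adj_imp (retractOfCut hA) hr

end CutVertex

variable {s : Finset V}

theorem wienerIndex_induce_of_dist_eq
    (h : ∀ x y : (s : Set V), (G.induce (s : Set V)).dist x y = G.dist x y) :
    wienerIndex (G.induce (s : Set V)) = (∑ x ∈ s, ∑ y ∈ s, G.dist x y) / 2 := by
  simp only [wienerIndex, h, sum_finset_coe]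
  rw [sum_finset_coe fun x => ∑ y ∈ s, G.dist x y]

theorem distSum_induce_of_dist_eq
    (h : ∀ x y : (s : Set V), (G.induce (s : Set V)).dist x y = G.dist x y) {x : V}
    (hx : x ∈ (s : Set V)) :
    distSum (G.induce (s : Set V)) ⟨x, hx⟩ = ∑ y ∈ s, G.dist x y := by
  simp only [distSum, h, sum_finset_coe fun y => G.dist x y]

end SimpleGraph

/-- Decomposition of the Wiener index at a cut vertex: if G is the union of two connected
induced subgraphs G₁ = G[A], G₂ = G[B] sharing only the vertex u, then
W(G) = W(G₁) + W(G₂) + (|A|-1)·D_{G₂}(u) + (|B|-1)·D_{G₁}(u). -/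
theorem stmt6 {V : Type*} [Fintype V] [DecidableEq V] (G : SimpleGraph V) (hG : G.Connected)
    (u : V) (A B : Finset V) (hA : u ∈ A) (hB : u ∈ B)
    (hU : A ∪ B = Finset.univ) (hI : A ∩ B = {u})
    (hedge : ∀ x y, G.Adj x y → (x ∈ A ∧ y ∈ A) ∨ (x ∈ B ∧ y ∈ B)) :
    wienerIndex G =
      wienerIndex (G.induce (A : Set V)) + wienerIndex (G.induce (B : Set V))
        + (A.card - 1) * distSum (G.induce (B : Set V)) ⟨u, by simpa using hB⟩
        + (B.card - 1) * distSum (G.induce (A : Set V)) ⟨u, by simpa using hA⟩ := by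
  have hdistA := dist_induce_of_cut hG hA hI hedge
  have hdistB := dist_induce_of_cut hG hB (by rwa [inter_comm]) fun x y h => (hedge x y h).symm
  have hsum := sum_sum_eq_of_cut (d := G.dist) hU hI (fun _ _ => dist_comm) dist_self
    fun x hx y hy => dist_eq_dist_add_dist_of_cut hG hI hedge hx hy
  rw [wienerIndex, hsum, wienerIndex_induce_of_dist_eq hdistA, wienerIndex_induce_of_dist_eq hdistB,
    distSum_induce_of_dist_eq hdistA, distSum_induce_of_dist_eq hdistB]
  obtain ⟨a, ha⟩ := even_sum_sum_of_symm G.dist (fun _ _ => dist_comm) (fun _ => dist_self) A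
  obtain ⟨b, hb⟩ := even_sum_sum_of_symm G.dist (fun _ _ => dist_comm) (fun _ => dist_self) B
  generalize (A.card - 1) * _ = cA
  generalize (B.card - 1) * _ = cB
  omega
end

section
/- Let G be a connected graph, H a connected graph with at least 2 vertices, u, v vertices of G, and w a vertex of H. Let G_1 (resp. G_2) be obtained by identifying w with u (resp. with v). If D_G(v) ≥ D_G(u), then W(G_2) ≥ W(G_1), with equality if and only if D_G(v) = D_G(u). -/
open Finset SimpleGraph

/-- The graph obtained from G and H by identifying the vertex w of H with the vertex u
of G (disjoint union with w merged into u). -/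
def glue {V W : Type*} (G : SimpleGraph V) (u : V) (H : SimpleGraph W) (w : W) :
    SimpleGraph (V ⊕ {x : W // x ≠ w}) :=
  SimpleGraph.fromRel (fun x y =>
    match x, y with
    | Sum.inl a, Sum.inl b => G.Adj a b
    | Sum.inr a, Sum.inr b => H.Adj a.1 b.1
    | Sum.inl a, Sum.inr b => a = u ∧ H.Adj w b.1
    | Sum.inr _, Sum.inl _ => False)

/-! Sending `inl a ↦ (a, w)` and `inr x ↦ (u, x)` embeds the glued graph isometrically into the
box product `G □ H`, so its distances are `d_G + d_H` of the coordinates. Summed over all pairs,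
the only contribution depending on `u` comes from pairs with one vertex on each side and equals
`2 (|H| - 1) D_G(u)`; hence `W(G_u) = c + (|H| - 1) D_G(u)` with `c` independent of `u`. -/

namespace SimpleGraph

variable {V V' : Type*} {G : SimpleGraph V} {G' : SimpleGraph V'}

lemma Hom.edist_le (f : G →g G') (a b : V) : G'.edist (f a) (f b) ≤ G.edist a b := by
  rw [edist_eq_sInf (G := G)]
  refine le_sInf ?_
  rintro _ ⟨p, rfl⟩
  simpa using (p.map f).edist_le

end SimpleGraph

section Glue

variable {V W : Type*} {G : SimpleGraph V} {H : SimpleGraph W} {u : V} {w : W}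

def glueToProd (u : V) (w : W) (x : V ⊕ {x : W // x ≠ w}) : V × W :=
  (Sum.elim id (fun _ => u) x, Sum.elim (fun _ => w) Subtype.val x)

def glueToBoxProd (G : SimpleGraph V) (u : V) (H : SimpleGraph W) (w : W) :
    glue G u H w →g G □ H where
  toFun := glueToProd u w
  map_rel' := by
    rintro (a | a) (b | b) h <;> simp_all [glue, glueToProd, boxProd_adj, adj_comm]

def glueInl (G : SimpleGraph V) (u : V) (H : SimpleGraph W) (w : W) : G →g glue G u H w where
  toFun := Sum.inl
  map_rel' h := by simp [glue, h, h.ne]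

variable [DecidableEq W]

def glueInr (G : SimpleGraph V) (u : V) (H : SimpleGraph W) (w : W) : H →g glue G u H w where
  toFun x := if h : x = w then Sum.inl u else Sum.inr ⟨x, h⟩
  map_rel' {a b} h := by
    by_cases ha : a = w <;> by_cases hb : b = w <;>
      simp_all [glue, h.ne, Subtype.ext_iff, adj_comm]

@[simp]
lemma glueInr_apply_self : glueInr G u H w w = Sum.inl u := dif_pos rfl

@[simp]
lemma glueInr_apply_of_ne {x : W} (hx : x ≠ w) : glueInr G u H w x = Sum.inr ⟨x, hx⟩ :=
  dif_neg hx

lemma edist_glue_inl_inr_le (a : V) (b : {x : W // x ≠ w}) :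
    (glue G u H w).edist (Sum.inl a) (Sum.inr b) ≤ G.edist a u + H.edist w b := by
  calc (glue G u H w).edist (Sum.inl a) (Sum.inr b)
      ≤ (glue G u H w).edist (Sum.inl a) (Sum.inl u)
        + (glue G u H w).edist (Sum.inl u) (Sum.inr b) := SimpleGraph.edist_triangle
    _ = (glue G u H w).edist (glueInl G u H w a) (glueInl G u H w u)
        + (glue G u H w).edist (glueInr G u H w w) (glueInr G u H w b) := by
        rw [glueInr_apply_self, glueInr_apply_of_ne b.2]; rfl
    _ ≤ G.edist a u + H.edist w b := add_le_add (Hom.edist_le _ _ _) (Hom.edist_le _ _ _)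

lemma edist_glue (x y : V ⊕ {x : W // x ≠ w}) :
    (glue G u H w).edist x y = (G □ H).edist (glueToProd u w x) (glueToProd u w y) := by
  refine le_antisymm ?_ ((glueToBoxProd G u H w).edist_le x y)
  rw [edist_boxProd]
  rcases x with a | a <;> rcases y with b | b <;>
    simp only [glueToProd, Sum.elim_inl, Sum.elim_inr, id, edist_self, add_zero, zero_add]
  · exact (glueInl G u H w).edist_le a b
  · exact edist_glue_inl_inr_le a b
  · rw [edist_comm, edist_comm (G := G), edist_comm (G := H)]
    exact edist_glue_inl_inr_le b a
  · simpa [glueInr_apply_of_ne a.2, glueInr_apply_of_ne b.2] using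
      (glueInr G u H w).edist_le a b

lemma dist_glue (hG : G.Connected) (hH : H.Connected) (x y : V ⊕ {x : W // x ≠ w}) :
    (glue G u H w).dist x y =
      G.dist (glueToProd u w x).1 (glueToProd u w y).1
        + H.dist (glueToProd u w x).2 (glueToProd u w y).2 := by
  rw [SimpleGraph.dist, edist_glue, edist_boxProd, ← (hG _ _).coe_dist_eq_edist,
    ← (hH _ _).coe_dist_eq_edist]
  rfl

end Glue

lemma sum_sum_dist_elim_const {V S : Type*} [Fintype V] [Fintype S] (G : SimpleGraph V) (u : V) :
    ∑ x : V ⊕ S, ∑ y : V ⊕ S,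
        G.dist (Sum.elim id (fun _ => u) x) (Sum.elim id (fun _ => u) y) =
      ∑ a, ∑ b, G.dist a b + 2 * Fintype.card S * distSum G u := by
  have hsum : ∑ b, G.dist u b = distSum G u := rfl
  have hsum' : ∑ a, G.dist a u = distSum G u := sum_congr rfl fun _ _ => dist_comm
  simp only [Fintype.sum_sum_type, Sum.elim_inl, Sum.elim_inr, id, dist_self, sum_const,
    card_univ, smul_eq_mul, ← mul_sum, hsum, hsum', sum_add_distrib]
  ring

lemma exists_wienerIndex_glue_eq {V W : Type*} [Fintype V] [Fintype W] [DecidableEq W]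
    {G : SimpleGraph V} {H : SimpleGraph W} (hG : G.Connected) (hH : H.Connected) (w : W) :
    ∃ c, ∀ u, wienerIndex (glue G u H w) = c + (Fintype.card W - 1) * distSum G u := by
  refine ⟨(∑ a, ∑ b, G.dist a b +
    ∑ x : V ⊕ {x : W // x ≠ w}, ∑ y : V ⊕ {x : W // x ≠ w},
      H.dist (Sum.elim (fun _ => w) Subtype.val x) (Sum.elim (fun _ => w) Subtype.val y)) / 2,
    fun u => ?_⟩
  have hcard : Fintype.card {x : W // x ≠ w} = Fintype.card W - 1 := by simp
  simp only [wienerIndex, dist_glue hG hH, glueToProd, sum_add_distrib,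
    sum_sum_dist_elim_const, hcard]
  rw [add_right_comm, mul_assoc, Nat.add_mul_div_left _ _ two_pos]

/-- Identifying a vertex w of H with a vertex of G of smaller distance-sum gives a graph
of smaller Wiener index, with equality iff the distance sums agree. -/
theorem stmt7 {V W : Type*} [Fintype V] [Fintype W] [DecidableEq W]
    (G : SimpleGraph V) (hG : G.Connected) (H : SimpleGraph W) (hH : H.Connected)
    (hW : 2 ≤ Fintype.card W) (u v : V) (w : W)
    (hD : distSum G u ≤ distSum G v) :
    wienerIndex (glue G u H w) ≤ wienerIndex (glue G v H w) ∧
      (wienerIndex (glue G u H w) = wienerIndex (glue G v H w) ↔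
        distSum G u = distSum G v) := by
  obtain ⟨c, hc⟩ := exists_wienerIndex_glue_eq hG hH w
  have hslope : 0 < Fintype.card W - 1 := by omega
  rw [hc u, hc v, add_right_inj, mul_right_inj' hslope.ne']
  exact ⟨by gcongr, Iff.rfl⟩
end

section
/- The Wiener index of the tree S_{d,k}, obtained by identifying a pendant vertex of the path P_d with the center of the star K_{1,k}, equals binomial(d+1,3) + k^2 + (d-1)k + d(d-1)k/2. -/
open Finset SimpleGraph

/-- The broom S_{d,k}: the path on vertices 0,…,d-1 together with k pendant vertices
d,…,d+k-1 all attached to the endpoint 0. -/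
def broom (d k : ℕ) : SimpleGraph (Fin (d + k)) :=
  SimpleGraph.fromRel (fun i j =>
    (j.val = i.val + 1 ∧ j.val < d) ∨ (i.val = 0 ∧ d ≤ j.val))

namespace BroomAux

def P (d i : ℕ) : ℕ := if i < d then i + 1 else 0
def F (d i j : ℕ) : ℕ :=
  if i = j then 0 else if d ≤ i ∧ d ≤ j then 2 else Nat.dist (P d i) (P d j)

lemma broom_adj {d k : ℕ} {u v : Fin (d + k)} :
    (broom d k).Adj u v ↔ u.val ≠ v.val ∧
      ((v.val = u.val + 1 ∧ v.val < d) ∨ (u.val = v.val + 1 ∧ u.val < d) ∨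
       (u.val = 0 ∧ d ≤ v.val) ∨ (v.val = 0 ∧ d ≤ u.val)) := by
  rw [broom, SimpleGraph.fromRel_adj]
  constructor
  · rintro ⟨hne, h⟩
    exact ⟨fun hh => hne (Fin.ext hh), by tauto⟩
  · rintro ⟨hne, h⟩
    exact ⟨fun hh => hne (congrArg Fin.val hh), by tauto⟩

lemma broom_adj' {d k : ℕ} {a b : ℕ} (ha : a < d + k) (hb : b < d + k)
    (hr : a ≠ b ∧ ((b = a + 1 ∧ b < d) ∨ (a = b + 1 ∧ a < d) ∨
      (a = 0 ∧ d ≤ b) ∨ (b = 0 ∧ d ≤ a))) :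
    (broom d k).Adj ⟨a, ha⟩ ⟨b, hb⟩ := broom_adj.mpr hr

lemma pathWalk {d k : ℕ} : ∀ (b a : ℕ) (hab : a ≤ b) (hb : b < d),
    ∃ w : (broom d k).Walk ⟨a, by omega⟩ ⟨b, by omega⟩, w.length = b - a := by
  intro b
  induction b with
  | zero => intro a hab hb
            obtain rfl : a = 0 := by omega
            exact ⟨.nil, rfl⟩
  | succ m ih =>
    intro a hab hb
    rcases eq_or_lt_of_le hab with rfl | h
    · exact ⟨.nil, by rw [SimpleGraph.Walk.length_nil]; omega⟩
    · obtain ⟨w, hw⟩ := ih a (by omega) (by omega)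
      refine ⟨w.concat (broom_adj' (by omega) (by omega) ⟨by omega, by omega⟩), ?_⟩
      rw [SimpleGraph.Walk.length_concat]; omega

lemma exists_walk_nat {d k : ℕ} (hd : 1 ≤ d) :
    ∀ (a b : ℕ) (ha : a < d + k) (hb : b < d + k),
    ∃ w : (broom d k).Walk ⟨a, ha⟩ ⟨b, hb⟩, w.length = F d a b := by
  have key : ∀ (a b : ℕ) (ha : a < d + k) (hb : b < d + k), a < b →
      ∃ w : (broom d k).Walk ⟨a, ha⟩ ⟨b, hb⟩, w.length = F d a b := by
    intro a b ha hb hab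
    by_cases hbd : b < d
    · obtain ⟨w, hw⟩ := pathWalk (d := d) (k := k) b a (by omega) hbd
      exact ⟨w, by rw [hw]; unfold F P Nat.dist; split_ifs <;> omega⟩
    · push_neg at hbd
      by_cases had : a < d
      · -- a on the path, b a leaf: a → 0 → b
        obtain ⟨w, hw⟩ := pathWalk (d := d) (k := k) a 0 (by omega) had
        refine ⟨w.reverse.concat (broom_adj' (by omega) hb ⟨by omega, by omega⟩), ?_⟩
        rw [SimpleGraph.Walk.length_concat, SimpleGraph.Walk.length_reverse, hw]
        unfold F P Nat.dist; split_ifs <;> omega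
      · -- both leaves: a → 0 → b
        push_neg at had
        refine ⟨.cons (broom_adj' ha (by omega) ⟨by omega, by omega⟩)
          (.cons (broom_adj' (a := 0) (by omega) hb ⟨by omega, by omega⟩) .nil), ?_⟩
        unfold F P Nat.dist; split_ifs <;> simp_all
  intro a b ha hb
  rcases lt_trichotomy a b with h | rfl | h
  · exact key a b ha hb h
  · exact ⟨.nil, by unfold F; simp⟩
  · obtain ⟨w, hw⟩ := key b a hb ha h
    exact ⟨w.reverse, by rw [SimpleGraph.Walk.length_reverse, hw]
                         unfold F P Nat.dist; split_ifs <;> omega⟩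


lemma F_step {d k : ℕ} (hd : 1 ≤ d) {u u' v : Fin (d + k)}
    (h : (broom d k).Adj u u') : F d u.val v.val ≤ F d u'.val v.val + 1 := by
  rw [broom_adj] at h
  obtain ⟨hne, hrel⟩ := h
  unfold F P Nat.dist
  split_ifs <;> omega

lemma walk_le {d k : ℕ} (hd : 1 ≤ d) {u v : Fin (d + k)}
    (w : (broom d k).Walk u v) : F d u.val v.val ≤ w.length := by
  induction w with
  | nil => simp [F]
  | @cons a b c h p ih =>
      rw [SimpleGraph.Walk.length_cons]
      have := F_step (v := c) hd h
      omega


lemma dist_eq {d k : ℕ} (hd : 1 ≤ d) (u v : Fin (d + k)) :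
    (broom d k).dist u v = F d u.val v.val := by
  obtain ⟨w, hw⟩ := exists_walk_nat hd u.val v.val u.isLt v.isLt
  have h1 : (broom d k).dist u v ≤ w.length := SimpleGraph.dist_le w
  have hreach : (broom d k).Reachable u v := w.reachable
  obtain ⟨p, hp⟩ := hreach.exists_walk_length_eq_dist
  have h2 : F d u.val v.val ≤ p.length := walk_le hd p
  omega

lemma sum_dist_path (d : ℕ) :
    ∑ i ∈ range d, ∑ j ∈ range d, Nat.dist i j = 2 * (d + 1).choose 3 := by
  induction d with
  | zero => simp; rfl
  | succ m ih =>
    have gauss : (∑ i ∈ range (m + 1), i) * 2 = (m + 1) * m :=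
      Finset.sum_range_id_mul_two (m + 1)
    have hrefl : ∑ j ∈ range m, (m - j) = ∑ i ∈ range (m + 1), i := by
      rw [← Finset.sum_range_reflect (fun j => m - j) m, Finset.sum_range_succ' (fun i => i) m]
      simp only [Nat.add_zero]
      apply Finset.sum_congr rfl
      intro j hj
      simp only [Finset.mem_range] at hj
      omega
    have hcol : ∑ i ∈ range m, Nat.dist i m = ∑ j ∈ range m, (m - j) := by
      apply Finset.sum_congr rfl
      intro j hj
      simp only [Finset.mem_range] at hj
      exact Nat.dist_eq_sub_of_le (le_of_lt hj)
    have hrow : ∑ j ∈ range m, Nat.dist m j = ∑ j ∈ range m, (m - j) := by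
      apply Finset.sum_congr rfl
      intro j hj
      simp only [Finset.mem_range] at hj
      rw [Nat.dist_comm]; exact Nat.dist_eq_sub_of_le (le_of_lt hj)
    have hchoose : (m + 1 + 1).choose 3 = (m + 1).choose 2 + (m + 1).choose 3 :=
      Nat.choose_succ_succ (m + 1) 2
    have hc2 : (m + 1).choose 2 * 2 = (m + 1) * m := by
      rw [Nat.choose_two_right]
      rw [Nat.div_mul_cancel]
      · simp
      · have := Nat.even_mul_succ_self m
        rw [mul_comm] at this
        simpa using this.two_dvd
    rw [Finset.sum_range_succ]
    simp_rw [Finset.sum_range_succ]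
    rw [Finset.sum_add_distrib, ih, hcol, hrow, Nat.dist_self, hrefl, hchoose]
    linarith


lemma main_sum (d k : ℕ) (hd : 1 ≤ d) :
    (∑ u : Fin (d + k), ∑ v : Fin (d + k), (broom d k).dist u v) =
      2 * ((d + 1).choose 3 + k ^ 2 + (d - 1) * k + d * (d - 1) * k / 2) := by
  have hsum : (∑ u : Fin (d + k), ∑ v : Fin (d + k), (broom d k).dist u v)
      = ∑ i ∈ range (d + k), ∑ j ∈ range (d + k), F d i j := by
    simp_rw [dist_eq hd]
    rw [← Fin.sum_univ_eq_sum_range (fun i => ∑ j ∈ range (d + k), F d i j) (d + k)]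
    apply Finset.sum_congr rfl; intro u _
    rw [← Fin.sum_univ_eq_sum_range (fun j => F d u.val j) (d + k)]
  have hsplit : ∀ g : ℕ → ℕ, ∑ i ∈ range (d + k), g i
      = ∑ i ∈ range d, g i + ∑ i ∈ Ico d (d + k), g i := by
    intro g
    rw [Finset.range_eq_Ico,
      ← Finset.sum_Ico_consecutive _ (Nat.zero_le d) (Nat.le_add_right d k),
      ← Finset.range_eq_Ico]
  rw [hsum, hsplit]
  simp_rw [hsplit]
  rw [Finset.sum_add_distrib, Finset.sum_add_distrib]
  set G' := ∑ i ∈ range d, (i + 1) with hG'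
  have hG2 : G' * 2 = (d + 1) * d := by
    have : G' = ∑ i ∈ range (d + 1), i := by
      rw [hG', Finset.sum_range_succ' (fun i => i) d]
      simp
    rw [this, Finset.sum_range_id_mul_two]
    simp
  have hB11 : ∑ i ∈ range d, ∑ j ∈ range d, F d i j = 2 * (d + 1).choose 3 := by
    rw [← sum_dist_path d]
    apply Finset.sum_congr rfl; intro i hi
    apply Finset.sum_congr rfl; intro j hj
    simp only [Finset.mem_range] at hi hj
    unfold F P Nat.dist
    split_ifs <;> omega
  have hB12 : ∑ i ∈ range d, ∑ j ∈ Ico d (d + k), F d i j = G' * k := by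
    rw [hG', Finset.sum_mul]
    apply Finset.sum_congr rfl; intro i hi
    simp only [Finset.mem_range] at hi
    have : ∑ j ∈ Ico d (d + k), F d i j = ∑ j ∈ Ico d (d + k), (i + 1) := by
      apply Finset.sum_congr rfl; intro j hj
      simp only [Finset.mem_Ico] at hj
      unfold F P Nat.dist
      split_ifs <;> omega
    rw [this, Finset.sum_const, Nat.card_Ico, smul_eq_mul,
      Nat.add_sub_cancel_left, mul_comm]
  have hB21 : ∑ i ∈ Ico d (d + k), ∑ j ∈ range d, F d i j = G' * k := by
    have : ∀ i ∈ Ico d (d + k), ∑ j ∈ range d, F d i j = G' := by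
      intro i hi
      simp only [Finset.mem_Ico] at hi
      rw [hG']
      apply Finset.sum_congr rfl; intro j hj
      simp only [Finset.mem_range] at hj
      unfold F P Nat.dist
      split_ifs <;> omega
    rw [Finset.sum_congr rfl this, Finset.sum_const, Nat.card_Ico, smul_eq_mul,
      Nat.add_sub_cancel_left, mul_comm]
  have hB22 : ∑ i ∈ Ico d (d + k), ∑ j ∈ Ico d (d + k), F d i j = k * ((k - 1) * 2) := by
    have : ∀ i ∈ Ico d (d + k), ∑ j ∈ Ico d (d + k), F d i j = (k - 1) * 2 := by
      intro i hi
      rw [← Finset.add_sum_erase _ _ hi]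
      have h0 : F d i i = 0 := by unfold F; simp
      have h2 : ∑ j ∈ (Ico d (d + k)).erase i, F d i j
          = ∑ j ∈ (Ico d (d + k)).erase i, 2 := by
        apply Finset.sum_congr rfl; intro j hj
        obtain ⟨hne, hj⟩ := Finset.mem_erase.mp hj
        simp only [Finset.mem_Ico] at hj hi
        unfold F
        split_ifs <;> omega
      rw [h0, h2, Finset.sum_const, Finset.card_erase_of_mem hi, Nat.card_Ico, smul_eq_mul]
      omega
    rw [Finset.sum_congr rfl this, Finset.sum_const, Nat.card_Ico, smul_eq_mul,
      Nat.add_sub_cancel_left]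
  rw [hB11, hB12, hB21, hB22]
  have hdvd : 2 ∣ d * (d - 1) * k :=
    ((Nat.even_mul_pred_self d).two_dvd).mul_right k
  have hhalf : 2 * (d * (d - 1) * k / 2) = d * (d - 1) * k := Nat.mul_div_cancel' hdvd
  obtain ⟨e, rfl⟩ : ∃ e, d = e + 1 := ⟨d - 1, by omega⟩
  have hsub : e + 1 - 1 = e := rfl
  rw [hsub] at hhalf ⊢
  rcases k with _ | m
  · simp
  · have hksub : m + 1 - 1 = m := rfl
    rw [hksub]
    have hGk : G' * (m + 1) + G' * (m + 1) = ((e + 1) + 1) * (e + 1) * (m + 1) := by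
      have : G' * (m + 1) + G' * (m + 1) = (G' * 2) * (m + 1) := by ring
      rw [this, hG2]
    rw [Nat.mul_add 2, Nat.mul_add 2, Nat.mul_add 2, hhalf]
    have hker : ((e + 1) + 1) * (e + 1) * (m + 1) + (m + 1) * (m * 2)
        = 2 * ((m + 1) ^ 2) + 2 * (e * (m + 1)) + (e + 1) * e * (m + 1) := by ring
    linarith [hGk, hker]

end BroomAux

/-- The Wiener index of the broom S_{d,k}. -/
theorem stmt9 (d k : ℕ) (hd : 1 ≤ d) :
    wienerIndex (broom d k) =
      (d + 1).choose 3 + k ^ 2 + (d - 1) * k + d * (d - 1) * k / 2 := by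
  unfold wienerIndex
  rw [BroomAux.main_sum d k hd]
  exact Nat.mul_div_cancel_left _ (by norm_num)
end

section
/- The Wiener index of the double broom T(l,k,d), obtained from the path P_d by attaching l pendant vertices to one endpoint and k pendant vertices to the other endpoint, equals binomial(d+1,3) + l^2 + k^2 + (d^2+d-2)(k+l)/2 + (d+1)kl. -/
open Finset SimpleGraph

/-- The double broom T(l,k,d): the path on vertices 0,…,d-1, with l pendant vertices
d,…,d+l-1 attached to the endpoint 0 and k pendant vertices d+l,…,d+l+k-1 attached to the
endpoint d-1. -/
def doubleBroom (l k d : ℕ) : SimpleGraph (Fin (l + k + d)) :=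
  SimpleGraph.fromRel (fun i j =>
    (i.val < d ∧ j.val = i.val + 1 ∧ j.val < d) ∨
    (i.val = 0 ∧ d ≤ j.val ∧ j.val < d + l) ∨
    (i.val = d - 1 ∧ d + l ≤ j.val))

namespace Broom

/-! ### The explicit distance function -/

def pj (l d i : ℕ) : ℕ := if i < d then i else if i < d + l then 0 else d - 1
def pe (d i : ℕ) : ℕ := if i < d then 0 else 1
def Dn (l d i j : ℕ) : ℕ :=
  if i = j then 0 else Nat.dist (pj l d i) (pj l d j) + pe d i + pe d j

lemma Dn_comm (l d i j : ℕ) : Dn l d i j = Dn l d j i := by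
  unfold Dn
  rcases eq_or_ne i j with rfl | h
  · simp
  · simp only [h, h.symm, if_false, Nat.dist_comm]
    omega

lemma Dn_triangle (l d i m j : ℕ) : Dn l d i j ≤ Dn l d i m + Dn l d m j := by
  unfold Dn
  rcases eq_or_ne i j with rfl | hij
  · simp
  rcases eq_or_ne i m with rfl | him
  · simp [hij]
  rcases eq_or_ne m j with rfl | hmj
  · simp [hij]
  have := Nat.dist.triangle_inequality (pj l d i) (pj l d m) (pj l d j)
  simp only [hij, him, hmj, if_false]
  omega

lemma Dn_rel (l d : ℕ) (hl : 1 ≤ l) (hd : 1 ≤ d) {i j : ℕ}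
    (h : (i < d ∧ j = i + 1 ∧ j < d) ∨ (i = 0 ∧ d ≤ j ∧ j < d + l) ∨
         (i = d - 1 ∧ d + l ≤ j)) :
    Dn l d i j = 1 := by
  unfold Dn pj pe
  rcases h with ⟨h1, rfl, h3⟩ | ⟨rfl, h2, h3⟩ | ⟨rfl, h2⟩
  · have hne : i ≠ i + 1 := by omega
    have hdist : Nat.dist i (i + 1) = 1 := by simp [Nat.dist]
    simp [hne, h1, h3, hdist]
  · have hne : (0 : ℕ) ≠ j := by omega
    have h4 : ¬ j < d := by omega
    simp [hne, hd, h4, h3, Nat.dist]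
    omega
  · have hne : d - 1 ≠ j := by omega
    have h3 : d - 1 < d := by omega
    have h4 : ¬ j < d := by omega
    have h5 : ¬ j < d + l := by omega
    simp [hne, h3, h4, h5, Nat.dist]

lemma Dn_adj {l k d : ℕ} (hl : 1 ≤ l) (hd : 1 ≤ d) {u v : Fin (l + k + d)}
    (h : (doubleBroom l k d).Adj u v) : Dn l d u.val v.val = 1 := by
  rw [doubleBroom, fromRel_adj] at h
  rcases h.2 with h' | h'
  · exact Dn_rel l d hl hd h'
  · rw [Dn_comm]; exact Dn_rel l d hl hd h'

lemma Dn_le_walk {l k d : ℕ} (hl : 1 ≤ l) (hd : 1 ≤ d) {u v : Fin (l + k + d)}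
    (W : (doubleBroom l k d).Walk u v) : Dn l d u.val v.val ≤ W.length := by
  induction W with
  | nil => simp [Dn]
  | @cons a b c h p ih =>
    have h1 := Dn_adj hl hd h
    have h2 := Dn_triangle l d a.val b.val c.val
    simp only [SimpleGraph.Walk.length_cons]
    omega

/-! ### Walks realising the distances -/

section
variable {l k d : ℕ}

lemma adj_step (hd : 1 ≤ d) {a : ℕ} (ha : a + 1 < d) :
    (doubleBroom l k d).Adj ⟨a, by omega⟩ ⟨a + 1, by omega⟩ := by
  rw [doubleBroom, fromRel_adj]
  constructor
  · intro h
    have := congrArg Fin.val h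
    simp at this
  · left; left
    refine ⟨?_, ?_, ?_⟩ <;> simp <;> omega

lemma adj_leafL (hd : 1 ≤ d) {u : Fin (l + k + d)} (h1 : d ≤ u.val) (h2 : u.val < d + l) :
    (doubleBroom l k d).Adj ⟨0, by omega⟩ u := by
  rw [doubleBroom, fromRel_adj]
  refine ⟨?_, Or.inl (Or.inr (Or.inl ⟨rfl, h1, h2⟩))⟩
  intro h
  have := congrArg Fin.val h
  simp at this
  omega

lemma adj_leafR (hl : 1 ≤ l) (hd : 1 ≤ d) {u : Fin (l + k + d)} (h1 : d + l ≤ u.val) :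
    (doubleBroom l k d).Adj ⟨d - 1, by omega⟩ u := by
  rw [doubleBroom, fromRel_adj]
  refine ⟨?_, Or.inl (Or.inr (Or.inr ⟨rfl, h1⟩))⟩
  intro h
  have := congrArg Fin.val h
  simp at this
  omega

lemma walk_step (hd : 1 ≤ d) (c : ℕ) : ∀ a : ℕ, (h : a + c < d) →
    ∃ W : (doubleBroom l k d).Walk ⟨a, by omega⟩ ⟨a + c, by omega⟩, W.length = c := by
  induction c with
  | zero => exact fun a h => ⟨SimpleGraph.Walk.nil, rfl⟩
  | succ c ih =>
    intro a h
    obtain ⟨W, hW⟩ := ih a (by omega)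
    refine ⟨W.concat (adj_step hd (by omega : a + c + 1 < d)), ?_⟩
    rw [SimpleGraph.Walk.length_concat, hW]

lemma walk_path (hd : 1 ≤ d) {a b : ℕ} (ha : a < d) (hb : b < d) :
    ∃ W : (doubleBroom l k d).Walk ⟨a, by omega⟩ ⟨b, by omega⟩, W.length = Nat.dist a b := by
  rcases le_total a b with hab | hab
  · obtain ⟨c, rfl⟩ := Nat.exists_eq_add_of_le hab
    obtain ⟨W, hW⟩ := walk_step (l := l) (k := k) hd c a (by omega)
    exact ⟨W, by rw [hW]; simp [Nat.dist]⟩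
  · obtain ⟨c, rfl⟩ := Nat.exists_eq_add_of_le hab
    obtain ⟨W, hW⟩ := walk_step (l := l) (k := k) hd c b (by omega)
    exact ⟨W.reverse, by rw [SimpleGraph.Walk.length_reverse, hW]; simp [Nat.dist]⟩

lemma broom_connected (hl : 1 ≤ l) (hd : 1 ≤ d) : (doubleBroom l k d).Connected := by
  have h0 : (0 : ℕ) < l + k + d := by omega
  have reach : ∀ u : Fin (l + k + d), (doubleBroom l k d).Reachable u ⟨0, h0⟩ := by
    intro u
    by_cases hu : u.val < d
    · obtain ⟨W, -⟩ := walk_path (l := l) (k := k) hd hu hd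
      exact ⟨W.copy (by simp) rfl⟩
    by_cases hu2 : u.val < d + l
    · exact ((adj_leafL hd (by omega) hu2).symm.reachable).trans (Reachable.refl _)
    · refine ((adj_leafR hl hd (by omega)).symm.reachable).trans ?_
      obtain ⟨W, -⟩ := walk_path (l := l) (k := k) hd (show d - 1 < d by omega) hd
      exact ⟨W⟩
  rw [connected_iff]
  exact ⟨fun u v => (reach u).trans (reach v).symm, ⟨⟨0, h0⟩⟩⟩

/-! ### The graph distance equals the explicit distance -/

lemma pj_lt (hd : 1 ≤ d) (i : ℕ) : pj l d i < d := by
  unfold pj; split_ifs <;> omega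

lemma dist_to_proj (hl : 1 ≤ l) (hd : 1 ≤ d) (u : Fin (l + k + d)) :
    (doubleBroom l k d).dist u ⟨pj l d u.val, by have := pj_lt (l := l) hd u.val; omega⟩
      ≤ pe d u.val := by
  have hp : pj l d u.val < l + k + d := by have := pj_lt (l := l) hd u.val; omega
  show (doubleBroom l k d).dist u ⟨pj l d u.val, hp⟩ ≤ pe d u.val
  by_cases hu : u.val < d
  · have : (⟨pj l d u.val, hp⟩ : Fin (l + k + d)) = u := by
      apply Fin.ext; simp [pj, hu]
    rw [this]
    simp [pe, hu]
  by_cases hu2 : u.val < d + l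
  · have hadj : (doubleBroom l k d).Adj u ⟨pj l d u.val, hp⟩ := by
      have := (adj_leafL (k := k) hd (by omega) hu2).symm
      convert this using 2
      simp [pj, hu, hu2]
    calc (doubleBroom l k d).dist u _ ≤ hadj.toWalk.length := dist_le _
    _ = 1 := by simp
    _ ≤ pe d u.val := by simp [pe, hu]
  · have hadj : (doubleBroom l k d).Adj u ⟨pj l d u.val, hp⟩ := by
      have := (adj_leafR (k := k) hl hd (by omega : d + l ≤ u.val)).symm
      convert this using 2
      simp [pj, hu, hu2]
    calc (doubleBroom l k d).dist u _ ≤ hadj.toWalk.length := dist_le _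
    _ = 1 := by simp
    _ ≤ pe d u.val := by simp [pe, hu]

lemma dist_eq_Dn (hl : 1 ≤ l) (hd : 1 ≤ d) (u v : Fin (l + k + d)) :
    (doubleBroom l k d).dist u v = Dn l d u.val v.val := by
  have hconn := broom_connected (l := l) (k := k) (d := d) hl hd
  apply le_antisymm
  · rcases eq_or_ne u v with rfl | huv
    · simp [Dn]
    have hpu := pj_lt (l := l) hd u.val
    have hpv := pj_lt (l := l) hd v.val
    set Pu : Fin (l + k + d) := ⟨pj l d u.val, by omega⟩
    set Pv : Fin (l + k + d) := ⟨pj l d v.val, by omega⟩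
    have t1 : (doubleBroom l k d).dist u v ≤
        (doubleBroom l k d).dist u Pu + (doubleBroom l k d).dist Pu v :=
      hconn.dist_triangle
    have t2 : (doubleBroom l k d).dist Pu v ≤
        (doubleBroom l k d).dist Pu Pv + (doubleBroom l k d).dist Pv v :=
      hconn.dist_triangle
    have b1 : (doubleBroom l k d).dist u Pu ≤ pe d u.val := dist_to_proj hl hd u
    have b3 : (doubleBroom l k d).dist Pv v ≤ pe d v.val := by
      rw [SimpleGraph.dist_comm]
      exact dist_to_proj hl hd v
    have b2 : (doubleBroom l k d).dist Pu Pv ≤ Nat.dist (pj l d u.val) (pj l d v.val) := by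
      obtain ⟨W, hW⟩ := walk_path (l := l) (k := k) hd hpu hpv
      calc (doubleBroom l k d).dist Pu Pv ≤ W.length := dist_le W
      _ = _ := hW
    have : Dn l d u.val v.val =
        Nat.dist (pj l d u.val) (pj l d v.val) + pe d u.val + pe d v.val := by
      unfold Dn
      rw [if_neg (fun h => huv (Fin.ext h))]
    omega
  · obtain ⟨W, hW⟩ := (hconn u v).exists_walk_length_eq_dist
    rw [← hW]
    exact Dn_le_walk hl hd W
end

/-! ### Arithmetic helper sums -/

lemma choose2_succ (n : ℕ) : (n + 1).choose 2 = n.choose 2 + n := by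
  rw [Nat.choose_succ_succ, Nat.choose_one_right]
  norm_num [Nat.succ_eq_add_one]
  omega

lemma choose3_succ (n : ℕ) : (n + 1).choose 3 = n.choose 3 + n.choose 2 := by
  rw [Nat.choose_succ_succ]
  norm_num [Nat.succ_eq_add_one]
  omega

lemma gauss0 (n : ℕ) : ∑ i ∈ range n, i = n.choose 2 := by
  induction n with
  | zero => simp
  | succ n ih => rw [Finset.sum_range_succ, ih, choose2_succ]

lemma gauss1 (d : ℕ) : ∑ i ∈ range d, (i + 1) = (d + 1).choose 2 := by
  rw [Finset.sum_add_distrib, gauss0, Finset.sum_const, card_range, choose2_succ]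
  simp

lemma gauss2 (d : ℕ) : ∑ i ∈ range d, (d - i) = (d + 1).choose 2 := by
  rw [← gauss1 d, ← Finset.sum_range_reflect]
  apply Finset.sum_congr rfl
  intro i hi
  simp at hi
  omega

lemma distrow (d : ℕ) : ∑ j ∈ range (d + 1), Nat.dist d j = (d + 1).choose 2 := by
  rw [← gauss2 d, Finset.sum_range_succ]
  simp only [Nat.dist_self, add_zero]
  apply Finset.sum_congr rfl
  intro j hj
  simp at hj
  simp [Nat.dist]
  omega

lemma distcol (d : ℕ) : ∑ i ∈ range d, Nat.dist i d = d.choose 2 + d := by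
  have : ∑ i ∈ range d, Nat.dist i d = ∑ i ∈ range d, (d - i) := by
    apply Finset.sum_congr rfl
    intro i hi; simp at hi; simp [Nat.dist]; omega
  rw [this, gauss2, choose2_succ]

lemma pathsum (d : ℕ) :
    ∑ i ∈ range d, ∑ j ∈ range d, Nat.dist i j = 2 * ((d + 1).choose 3) := by
  induction d with
  | zero => decide
  | succ d ih =>
    rw [Finset.sum_range_succ, distrow]
    have : ∑ i ∈ range d, ∑ j ∈ range (d + 1), Nat.dist i j
        = (∑ i ∈ range d, ∑ j ∈ range d, Nat.dist i j) + (d.choose 2 + d) := by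
      rw [← distcol d, ← Finset.sum_add_distrib]
      apply Finset.sum_congr rfl
      intro i hi
      rw [Finset.sum_range_succ]
    rw [this, ih, choose3_succ (d + 1), choose2_succ d]
    omega

lemma itesum {m i0 : ℕ} (h : i0 < m) :
    ∑ j0 ∈ range m, (if i0 = j0 then 0 else 2) = 2 * m - 2 := by
  have h1 : ∑ j0 ∈ range m, (if i0 = j0 then (0:ℕ) else 2)
      + ∑ j0 ∈ range m, (if i0 = j0 then (2:ℕ) else 0) = ∑ j0 ∈ range m, 2 := by
    rw [← Finset.sum_add_distrib]
    apply Finset.sum_congr rfl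
    intro j hj
    split_ifs <;> omega
  rw [Finset.sum_ite_eq] at h1
  simp [h] at h1
  omega

/-! ### Values of `Dn` on the various regions -/

section
variable {l k d : ℕ}

lemma Dn_pp {i j : ℕ} (hi : i < d) (hj : j < d) : Dn l d i j = Nat.dist i j := by
  unfold Dn pj pe
  rcases eq_or_ne i j with rfl | h
  · simp [Nat.dist_self]
  · simp [h, hi, hj]

lemma Dn_pL {i j0 : ℕ} (hi : i < d) (hj0 : j0 < l) : Dn l d i (d + j0) = i + 1 := by
  unfold Dn pj pe
  have h1 : i ≠ d + j0 := by omega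
  have h2 : ¬ d + j0 < d := by omega
  have h3 : d + j0 < d + l := by omega
  simp [h1, h2, h3, hi, Nat.dist]

lemma Dn_pR {i j0 : ℕ} (hi : i < d) : Dn l d i (d + l + j0) = d - i := by
  unfold Dn pj pe
  have h1 : i ≠ d + l + j0 := by omega
  have h2 : ¬ d + l + j0 < d := by omega
  have h3 : ¬ d + l + j0 < d + l := by omega
  simp [h1, h2, h3, hi, Nat.dist]
  omega

lemma Dn_LL {i0 j0 : ℕ} (hi0 : i0 < l) (hj0 : j0 < l) :
    Dn l d (d + i0) (d + j0) = if i0 = j0 then 0 else 2 := by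
  unfold Dn pj pe
  rcases eq_or_ne i0 j0 with rfl | h
  · simp
  · have h1 : d + i0 ≠ d + j0 := by omega
    have h2 : ¬ d + i0 < d := by omega
    have h3 : ¬ d + j0 < d := by omega
    simp [h1, h2, h3, hi0, hj0, h, Nat.dist, Nat.lt_add_right _ hi0, Nat.lt_add_right _ hj0]

lemma Dn_LR (hd : 1 ≤ d) {i0 j0 : ℕ} (hi0 : i0 < l) :
    Dn l d (d + i0) (d + l + j0) = d + 1 := by
  unfold Dn pj pe
  have h1 : d + i0 ≠ d + l + j0 := by omega
  have h2 : ¬ d + i0 < d := by omega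
  have h3 : d + i0 < d + l := by omega
  have h4 : ¬ d + l + j0 < d := by omega
  have h5 : ¬ d + l + j0 < d + l := by omega
  simp [h1, h2, h3, h4, h5, Nat.dist]
  omega

lemma Dn_RR {i0 j0 : ℕ} :
    Dn l d (d + l + i0) (d + l + j0) = if i0 = j0 then 0 else 2 := by
  unfold Dn pj pe
  rcases eq_or_ne i0 j0 with rfl | h
  · simp
  · have h1 : d + l + i0 ≠ d + l + j0 := by omega
    have h2 : ¬ d + l + i0 < d := by omega
    have h3 : ¬ d + l + j0 < d := by omega
    have h4 : ¬ d + l + i0 < d + l := by omega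
    have h5 : ¬ d + l + j0 < d + l := by omega
    simp [h1, h2, h3, h4, h5, h, Nat.dist]

lemma rowP (hd : 1 ≤ d) {i : ℕ} (hi : i < d) :
    ∑ j ∈ range (d + l + k), Dn l d i j
      = (∑ j ∈ range d, Nat.dist i j) + l * (i + 1) + k * (d - i) := by
  rw [Finset.sum_range_add, Finset.sum_range_add]
  congr 1
  · congr 1
    · exact Finset.sum_congr rfl fun j hj => Dn_pp hi (mem_range.mp hj)
    · rw [Finset.sum_congr rfl fun j0 hj0 => Dn_pL hi (mem_range.mp hj0)]
      simp [mul_comm]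
  · rw [Finset.sum_congr rfl fun j0 _ => Dn_pR (l := l) hi]
    simp [mul_comm]

lemma rowL (hl : 1 ≤ l) (hd : 1 ≤ d) {i0 : ℕ} (hi0 : i0 < l) :
    ∑ j ∈ range (d + l + k), Dn l d (d + i0) j
      = (d + 1).choose 2 + (2 * l - 2) + k * (d + 1) := by
  rw [Finset.sum_range_add, Finset.sum_range_add]
  congr 1
  · congr 1
    · have e1 : ∑ j ∈ range d, Dn l d (d + i0) j = ∑ j ∈ range d, (j + 1) :=
        Finset.sum_congr rfl fun j hj => by
          rw [Dn_comm]; exact Dn_pL (mem_range.mp hj) hi0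
      rw [e1, gauss1]
    · rw [Finset.sum_congr rfl fun j0 hj0 => Dn_LL hi0 (mem_range.mp hj0)]
      exact itesum hi0
  · rw [Finset.sum_congr rfl fun j0 _ => Dn_LR hd hi0]
    simp [mul_comm]

lemma rowR (hl : 1 ≤ l) (hd : 1 ≤ d) {i0 : ℕ} (hi0 : i0 < k) :
    ∑ j ∈ range (d + l + k), Dn l d (d + l + i0) j
      = (d + 1).choose 2 + l * (d + 1) + (2 * k - 2) := by
  rw [Finset.sum_range_add, Finset.sum_range_add]
  congr 1
  · congr 1
    · have e1 : ∑ j ∈ range d, Dn l d (d + l + i0) j = ∑ j ∈ range d, (d - j) :=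
        Finset.sum_congr rfl fun j hj => by
          rw [Dn_comm]; exact Dn_pR (mem_range.mp hj)
      rw [e1, gauss2]
    · have e2 : ∑ j0 ∈ range l, Dn l d (d + j0) (d + l + i0) = ∑ _j0 ∈ range l, (d + 1) :=
        Finset.sum_congr rfl fun j0 hj0 => Dn_LR hd (mem_range.mp hj0)
      rw [show ∑ j0 ∈ range l, Dn l d (d + l + i0) (d + j0)
          = ∑ j0 ∈ range l, Dn l d (d + j0) (d + l + i0) from
          Finset.sum_congr rfl fun j0 _ => Dn_comm l d _ _, e2]
      simp [mul_comm]
  · rw [Finset.sum_congr rfl fun j0 _ => Dn_RR (l := l)]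
    exact itesum hi0

lemma Tsum (hl : 1 ≤ l) (hk : 1 ≤ k) (hd : 1 ≤ d) :
    ∑ i ∈ range (l + k + d), ∑ j ∈ range (l + k + d), Dn l d i j
      = 2 * ((d + 1).choose 3) + 2 * l * ((d + 1).choose 2) + 2 * k * ((d + 1).choose 2)
        + l * (2 * l - 2) + k * (2 * k - 2) + 2 * (k * l * (d + 1)) := by
  have hn : l + k + d = d + l + k := by omega
  rw [hn, Finset.sum_range_add, Finset.sum_range_add]
  rw [Finset.sum_congr rfl fun i hi => rowP (k := k) hd (mem_range.mp hi)]
  rw [Finset.sum_congr rfl fun i0 hi0 => rowL (k := k) hl hd (mem_range.mp hi0)]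
  rw [Finset.sum_congr rfl fun i0 hi0 => rowR hl hd (mem_range.mp hi0)]
  rw [Finset.sum_add_distrib, Finset.sum_add_distrib, ← Finset.mul_sum, ← Finset.mul_sum,
    pathsum, gauss1, gauss2, Finset.sum_const, Finset.sum_const, card_range, card_range]
  simp only [smul_eq_mul]
  generalize (2 * l - 2) = A
  generalize (2 * k - 2) = B
  ring
end
end Broom

/-- The Wiener index of the double broom T(l,k,d). -/
theorem stmt10 (l k d : ℕ) (hl : 1 ≤ l) (hk : 1 ≤ k) (hd : 1 ≤ d) :
    wienerIndex (doubleBroom l k d) =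
      (d + 1).choose 3 + l ^ 2 + k ^ 2 + (d ^ 2 + d - 2) * (k + l) / 2 + (d + 1) * k * l := by
  have hsum : (∑ u : Fin (l + k + d), ∑ v : Fin (l + k + d), (doubleBroom l k d).dist u v)
      = ∑ i ∈ range (l + k + d), ∑ j ∈ range (l + k + d), Broom.Dn l d i j := by
    rw [← Fin.sum_univ_eq_sum_range (fun i => ∑ j ∈ range (l + k + d), Broom.Dn l d i j)]
    apply Finset.sum_congr rfl
    intro u _
    rw [← Fin.sum_univ_eq_sum_range (fun j => Broom.Dn l d u.val j)]
    exact Finset.sum_congr rfl fun v _ => Broom.dist_eq_Dn hl hd u v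
  unfold wienerIndex
  rw [hsum, Broom.Tsum hl hk hd]
  obtain ⟨d', rfl⟩ : ∃ d', d = d' + 1 := ⟨d - 1, by omega⟩
  obtain ⟨l', rfl⟩ : ∃ l', l = l' + 1 := ⟨l - 1, by omega⟩
  obtain ⟨k', rfl⟩ : ∃ k', k = k' + 1 := ⟨k - 1, by omega⟩
  set g : ℕ := (d' + 1 + 1).choose 2 with hgdef
  have hs := Finset.sum_range_id_mul_two (d' + 1)
  simp only [Nat.add_sub_cancel] at hs
  have hg1 := Broom.gauss1 (d' + 1)
  rw [Finset.sum_add_distrib, Finset.sum_const, card_range, smul_eq_mul, mul_one] at hg1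
  have hg : 2 * g = (d' + 1) * (d' + 1) + (d' + 1) := by
    have e : (d' + 1) * (d' + 1) + (d' + 1) = (d' + 1) * d' + 2 * (d' + 1) := by ring
    rw [e, ← hs, hgdef, ← hg1]
    ring
  have hgpos : 1 ≤ g := Nat.choose_pos (by omega)
  obtain ⟨G, hGg⟩ : ∃ G, g = G + 1 := ⟨g - 1, by omega⟩
  have hA : ((d' + 1) ^ 2 + (d' + 1) - 2) * ((k' + 1) + (l' + 1))
      = 2 * (G * ((k' + 1) + (l' + 1))) := by
    rw [pow_two, ← hg, hGg, show 2 * (G + 1) - 2 = 2 * G by omega]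
    ring
  rw [hA]
  have hE : 2 * ((d' + 1 + 1).choose 3) + 2 * (l' + 1) * g + 2 * (k' + 1) * g
        + (l' + 1) * (2 * (l' + 1) - 2) + (k' + 1) * (2 * (k' + 1) - 2)
        + 2 * ((k' + 1) * (l' + 1) * (d' + 1 + 1))
      = 2 * ((d' + 1 + 1).choose 3 + (l' + 1) ^ 2 + (k' + 1) ^ 2
        + G * ((k' + 1) + (l' + 1)) + (d' + 1 + 1) * (k' + 1) * (l' + 1)) := by
    rw [hGg, show 2 * (l' + 1) - 2 = 2 * l' by omega, show 2 * (k' + 1) - 2 = 2 * k' by omega]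
    ring
  rw [hE, Nat.mul_div_cancel_left _ (by norm_num : (0:ℕ) < 2),
    Nat.mul_div_cancel_left _ (by norm_num : (0:ℕ) < 2)]
end

section
/- The Wiener index of the spider T_l^q, the tree on lq+1 vertices consisting of a center vertex with l paths of q vertices each attached to it, equals l·binomial(q+2,3) + q^2·l·(q+1)·(l-1)/2. -/
open Finset SimpleGraph

/-- The spider T_l^q: a center vertex (none) with l paths of q vertices each attached;
vertex some (b, p) is the (p+1)-st vertex on the b-th branch. -/
def spider (l q : ℕ) : SimpleGraph (Option (Fin l × Fin q)) :=
  SimpleGraph.fromRel (fun x y =>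
    match x, y with
    | none, some (_, p) => p.val = 0
    | some (b, p), some (b', p') => b = b' ∧ p'.val = p.val + 1
    | _, _ => False)

variable {l q : ℕ}

lemma spider_adj0 (b : Fin l) (h0 : 0 < q) : (spider l q).Adj none (some (b, ⟨0, h0⟩)) := by
  simp [spider, SimpleGraph.fromRel_adj]

lemma spider_adjS (b : Fin l) (p : ℕ) (h : p + 1 < q) :
    (spider l q).Adj (some (b, ⟨p, by omega⟩)) (some (b, ⟨p+1, h⟩)) := by
  simp [spider, SimpleGraph.fromRel_adj, Fin.ext_iff]

def toRoot (l q : ℕ) (b : Fin l) : (p : ℕ) → (hp : p < q) →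
    (spider l q).Walk (some (b, ⟨p, hp⟩)) none
  | 0, hp => SimpleGraph.Walk.cons (spider_adj0 b hp).symm SimpleGraph.Walk.nil
  | p+1, hp => SimpleGraph.Walk.cons (spider_adjS b p hp).symm (toRoot l q b p (by omega))

lemma toRoot_length (b : Fin l) (p : ℕ) (hp : p < q) : (toRoot l q b p hp).length = p + 1 := by
  induction p with
  | zero => rfl
  | succ n ih => simp [toRoot, ih]

def upPath (l q : ℕ) (b : Fin l) (p : ℕ) : (d : ℕ) → (h : p + d < q) →
    (spider l q).Walk (some (b, ⟨p, by omega⟩)) (some (b, ⟨p + d, h⟩))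
  | 0, h => SimpleGraph.Walk.nil
  | d+1, h => (upPath l q b p d (by omega)).concat (spider_adjS b (p+d) (by omega))

lemma upPath_length (b : Fin l) (p d : ℕ) (h : p + d < q) : (upPath l q b p d h).length = d := by
  induction d with
  | zero => rfl
  | succ n ih => simp [upPath, SimpleGraph.Walk.length_concat, ih]

lemma walk_lb {V : Type*} {G : SimpleGraph V} (f : V → ℤ)
    (hf : ∀ x y, G.Adj x y → |f x - f y| ≤ 1) :
    ∀ {u v : V} (w : G.Walk u v), |f u - f v| ≤ w.length := by
  intro u v w
  induction w with
  | nil => simp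
  | @cons a b c h p ih =>
    have h1 := hf a b h
    have := abs_sub_le (f a) (f b) (f c)
    simp only [SimpleGraph.Walk.length_cons]
    push_cast
    linarith

lemma dist_lb {V : Type*} {G : SimpleGraph V} (f : V → ℤ)
    (hf : ∀ x y, G.Adj x y → |f x - f y| ≤ 1) {u v : V} (h : G.Reachable u v) :
    |f u - f v| ≤ (G.dist u v : ℤ) := by
  obtain ⟨w, hw⟩ := h.exists_walk_length_eq_dist
  rw [← hw]
  exact walk_lb f hf w

/-- depth function -/
def f0 (l q : ℕ) : Option (Fin l × Fin q) → ℤ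
  | none => 0
  | some (_, p) => p.val + 1

lemma f0_lip : ∀ x y, (spider l q).Adj x y → |f0 l q x - f0 l q y| ≤ 1 := by
  intro x y hxy
  rw [spider, SimpleGraph.fromRel_adj] at hxy
  obtain ⟨-, h | h⟩ := hxy <;>
  · rcases x with _ | ⟨c, r⟩ <;> rcases y with _ | ⟨c', r'⟩ <;> simp_all [f0]

def fb (l q : ℕ) (b : Fin l) : Option (Fin l × Fin q) → ℤ
  | none => 0
  | some (c, p) => if c = b then (p.val + 1 : ℤ) else -(p.val + 1)

lemma fb_lip (b : Fin l) : ∀ x y, (spider l q).Adj x y → |fb l q b x - fb l q b y| ≤ 1 := by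
  intro x y hxy
  rw [spider, SimpleGraph.fromRel_adj] at hxy
  obtain ⟨-, h | h⟩ := hxy <;>
    rcases x with _ | ⟨c, r⟩ <;> rcases y with _ | ⟨c', r'⟩
  all_goals first
    | exact h.elim
    | (try obtain ⟨rfl, h2⟩ := h
       simp only [fb]
       split_ifs <;> (rw [abs_le]; constructor <;> push_cast <;> omega))

lemma spider_reach_none (b : Fin l) (p : Fin q) :
    (spider l q).Reachable (some (b, p)) none :=
  ⟨((toRoot l q b p.val p.isLt).copy (by simp) rfl :
      (spider l q).Walk (some (b, p)) none)⟩

lemma dist_none_some (b : Fin l) (p : Fin q) :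
    (spider l q).dist none (some (b, p)) = p.val + 1 := by
  have hub : (spider l q).dist none (some (b, p)) ≤ p.val + 1 := by
    have := SimpleGraph.dist_le
      (((toRoot l q b p.val p.isLt).copy (by simp) rfl :
        (spider l q).Walk (some (b, p)) none)).reverse
    simpa [SimpleGraph.Walk.length_reverse, SimpleGraph.Walk.length_copy, toRoot_length]
      using this
  have hlb := dist_lb (f0 l q) f0_lip ((spider_reach_none b p).symm)
  simp only [f0] at hlb
  rw [abs_le] at hlb
  omega

lemma dist_some_same (b : Fin l) (p p' : Fin q) :
    (spider l q).dist (some (b, p)) (some (b, p')) = (p'.val - p.val) + (p.val - p'.val) := by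
  have hlb := dist_lb (f0 l q) f0_lip
      (((spider_reach_none b p)).trans (spider_reach_none b p').symm)
  simp only [f0] at hlb
  rw [abs_le] at hlb
  have hub : (spider l q).dist (some (b, p)) (some (b, p')) ≤ (p'.val - p.val) + (p.val - p'.val) := by
    rcases le_total p.val p'.val with hle | hle
    · have := SimpleGraph.dist_le
        (((upPath l q b p.val (p'.val - p.val) (by omega)).copy
          (by simp) (by simp only [Option.some.injEq, Prod.mk.injEq, Fin.ext_iff]; exact ⟨by simp, by omega⟩) :
          (spider l q).Walk (some (b, p)) (some (b, p'))))
      rw [SimpleGraph.Walk.length_copy, upPath_length] at this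
      omega
    · have := SimpleGraph.dist_le
        (((upPath l q b p'.val (p.val - p'.val) (by omega)).copy
          (by simp) (by simp only [Option.some.injEq, Prod.mk.injEq, Fin.ext_iff]; exact ⟨by simp, by omega⟩) :
          (spider l q).Walk (some (b, p')) (some (b, p)))).reverse
      rw [SimpleGraph.Walk.length_reverse, SimpleGraph.Walk.length_copy, upPath_length] at this
      omega
  omega

lemma dist_some_cross (b b' : Fin l) (hbb : b ≠ b') (p p' : Fin q) :
    (spider l q).dist (some (b, p)) (some (b', p')) = p.val + p'.val + 2 := by
  have hlb := dist_lb (fb l q b) (fb_lip b)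
      (((spider_reach_none b p)).trans (spider_reach_none b' p').symm)
  simp only [fb] at hlb
  rw [if_pos trivial, if_neg (Ne.symm hbb), abs_le] at hlb
  have hub : (spider l q).dist (some (b, p)) (some (b', p')) ≤ p.val + p'.val + 2 := by
    have := SimpleGraph.dist_le
      ((((toRoot l q b p.val p.isLt).append
        (toRoot l q b' p'.val p'.isLt).reverse).copy (by simp) (by simp) :
        (spider l q).Walk (some (b, p)) (some (b', p'))))
    rw [SimpleGraph.Walk.length_copy, SimpleGraph.Walk.length_append,
      SimpleGraph.Walk.length_reverse, toRoot_length, toRoot_length] at this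
    omega
  omega

lemma sumP (q : ℕ) : (∑ p ∈ range q, (p+1)) * 2 = q * (q+1) := by
  induction q with
  | zero => simp
  | succ k ih => rw [Finset.sum_range_succ, add_mul, ih]; ring

lemma sumT (q : ℕ) : (∑ p ∈ range q, ∑ p' ∈ range q, ((p' - p) + (p - p'))) * 3 + q
    = q*q*q := by
  induction q with
  | zero => simp
  | succ k ih =>
    have h1 : ∑ p ∈ range k, ((k - p) + (p - k)) = ∑ p ∈ range k, (p+1) := by
      rw [← Finset.sum_range_reflect]
      refine Finset.sum_congr rfl fun j hj => ?_
      rw [Finset.mem_range] at hj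
      omega
    have h2 : ∑ p' ∈ range k, ((p' - k) + (k - p')) = ∑ p ∈ range k, (p+1) := by
      rw [← Finset.sum_range_reflect]
      refine Finset.sum_congr rfl fun j hj => ?_
      rw [Finset.mem_range] at hj
      omega
    simp only [Finset.sum_range_succ]
    rw [Finset.sum_add_distrib, h1, h2]
    have hP := sumP k
    simp only [Nat.sub_self, add_zero, Nat.add_sub_cancel]
    zify at ih hP ⊢
    linear_combination ih + 3 * hP

lemma sumU (q : ℕ) : ∑ p ∈ range q, ∑ p' ∈ range q, (p + p' + 2) = q*q*(q+1) := by
  induction q with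
  | zero => simp
  | succ k ih =>
    have h1 : ∑ p ∈ range k, (p + k + 2) = (∑ p ∈ range k, (p+1)) + k*(k+1) := by
      rw [Finset.sum_congr rfl (fun j _ => (by omega : j + k + 2 = (j+1) + (k+1))),
        Finset.sum_add_distrib, Finset.sum_const, Finset.card_range, smul_eq_mul]
    have h2 : ∑ p' ∈ range k, (k + p' + 2) = (∑ p ∈ range k, (p+1)) + k*(k+1) := by
      rw [← h1]
      refine Finset.sum_congr rfl fun j hj => ?_
      omega
    simp only [Finset.sum_range_succ]
    rw [Finset.sum_add_distrib, h1, h2, ih]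
    have hP := sumP k
    zify at hP ⊢
    linear_combination hP

lemma choose2 (n : ℕ) : 2 * ((n+1).choose 2) = n * (n+1) := by
  induction n with
  | zero => rfl
  | succ k ih =>
    rw [show k+1+1 = (k+1)+1 from rfl, Nat.choose_succ_succ (k+1) 1, Nat.mul_add, ih,
      Nat.choose_one_right]
    ring

lemma choose3 (q : ℕ) : 6 * ((q+2).choose 3) = q * (q+1) * (q+2) := by
  induction q with
  | zero => rfl
  | succ k ih =>
    rw [show k+1+2 = (k+2)+1 from rfl, Nat.choose_succ_succ (k+2) 2, Nat.mul_add, ih]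
    have h2 := choose2 (k+1)
    zify at h2 ⊢
    linear_combination 3 * h2


/-- The Wiener index of the spider T_l^q. -/
theorem stmt11 (l q : ℕ) (hl : 1 ≤ l) (hq : 1 ≤ q) :
    wienerIndex (spider l q) =
      l * (q + 2).choose 3 + q ^ 2 * l * (q + 1) * (l - 1) / 2 := by
  unfold wienerIndex
  classical
  have hP := sumP q
  have hT := sumT q
  have hU := sumU q
  have hch := choose3 q
  set P := ∑ p ∈ range q, (p+1) with hPdef
  set T := ∑ p ∈ range q, ∑ p' ∈ range q, ((p' - p) + (p - p')) with hTdef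
  set U := ∑ p ∈ range q, ∑ p' ∈ range q, (p + p' + 2) with hUdef
  have h_none : (∑ v, (spider l q).dist none v) = l * P := by
    rw [Fintype.sum_option, Fintype.sum_prod_type, SimpleGraph.dist_self]
    rw [Finset.sum_congr rfl fun (b : Fin l) _ =>
      Finset.sum_congr rfl fun (p : Fin q) _ => dist_none_some b p]
    rw [Finset.sum_congr rfl fun (b : Fin l) _ =>
      Fin.sum_univ_eq_sum_range (fun n => n + 1) q]
    rw [Finset.sum_const, Finset.card_univ, Fintype.card_fin, smul_eq_mul, zero_add]
  have h_inner : ∀ (b : Fin l) (p : Fin q),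
      (∑ v, (spider l q).dist (some (b, p)) v) =
        (p.val + 1) + ((∑ p' ∈ range q, ((p' - p.val) + (p.val - p'))) +
          (l - 1) * (∑ p' ∈ range q, (p.val + p' + 2))) := by
    intro b p
    rw [Fintype.sum_option, Fintype.sum_prod_type]
    have t1 : (spider l q).dist (some (b, p)) none = p.val + 1 := by
      rw [SimpleGraph.dist_comm]; exact dist_none_some b p
    rw [t1]
    congr 1
    rw [← Finset.add_sum_erase _ _ (Finset.mem_univ b)]
    congr 1
    · rw [Finset.sum_congr rfl fun (p' : Fin q) _ => dist_some_same b p p']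
      exact Fin.sum_univ_eq_sum_range (fun n => (n - p.val) + (p.val - n)) q
    · rw [Finset.sum_congr rfl fun (b' : Fin l) hb' =>
        Finset.sum_congr rfl fun (p' : Fin q) _ =>
          dist_some_cross b b' (Finset.ne_of_mem_erase hb').symm p p']
      rw [Finset.sum_congr rfl fun (b' : Fin l) _ =>
        Fin.sum_univ_eq_sum_range (fun n => p.val + n + 2) q]
      rw [Finset.sum_const, Finset.card_erase_of_mem (Finset.mem_univ b),
        Finset.card_univ, Fintype.card_fin, smul_eq_mul]
  have h_some : (∑ b : Fin l, ∑ p : Fin q, ∑ v, (spider l q).dist (some (b, p)) v)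
      = l * (P + (T + (l - 1) * U)) := by
    rw [Finset.sum_congr rfl fun (b : Fin l) _ =>
      Finset.sum_congr rfl fun (p : Fin q) _ => h_inner b p]
    rw [Finset.sum_congr rfl fun (b : Fin l) _ =>
      Fin.sum_univ_eq_sum_range (fun n => (n + 1) + ((∑ p' ∈ range q, ((p' - n) + (n - p'))) +
        (l - 1) * (∑ p' ∈ range q, (n + p' + 2)))) q]
    rw [Finset.sum_const, Finset.card_univ, Fintype.card_fin, smul_eq_mul]
    congr 1
    rw [Finset.sum_add_distrib]
    congr 1
    rw [Finset.sum_add_distrib, ← Finset.mul_sum]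
  have hS : (∑ u : Option (Fin l × Fin q), ∑ v, (spider l q).dist u v)
      = l * P + l * (P + (T + (l - 1) * U)) := by
    rw [Fintype.sum_option, Fintype.sum_prod_type, h_none, h_some]
  have key : 6 * (l * P + l * (P + (T + (l - 1) * U)))
      = 6 * (2 * (l * ((q + 2).choose 3)) + q ^ 2 * l * (q + 1) * (l - 1)) := by
    obtain ⟨m, rfl⟩ : ∃ m, l = m + 1 := ⟨l - 1, by omega⟩
    simp only [Nat.add_sub_cancel]
    zify at hP hT hU hch ⊢
    linear_combination (6 * ((m : ℤ) + 1)) * hP + (2 * ((m : ℤ) + 1)) * hT +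
      (6 * (m : ℤ) * ((m : ℤ) + 1)) * hU - (2 * ((m : ℤ) + 1)) * hch
  have hS2 : (∑ u : Option (Fin l × Fin q), ∑ v, (spider l q).dist u v)
      = 2 * (l * ((q + 2).choose 3)) + q ^ 2 * l * (q + 1) * (l - 1) := by
    rw [hS]
    exact Nat.eq_of_mul_eq_mul_left (by norm_num) key
  have h2 : 2 ∣ q ^ 2 * l * (q + 1) * (l - 1) := by
    obtain ⟨c, hc⟩ := Nat.even_mul_succ_self q
    refine ⟨c * q * l * (l - 1), ?_⟩
    calc q ^ 2 * l * (q + 1) * (l - 1) = (q * (q + 1)) * (q * l * (l - 1)) := by ring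
      _ = (c + c) * (q * l * (l - 1)) := by rw [← hc]
      _ = 2 * (c * q * l * (l - 1)) := by ring
  obtain ⟨c, hc⟩ := h2
  rw [hS2, hc, show 2 * (l * ((q + 2).choose 3)) + 2 * c = 2 * (l * ((q + 2).choose 3) + c) by ring,
    Nat.mul_div_cancel_left _ two_pos, Nat.mul_div_cancel_left _ two_pos]
end

section
/- Let m_1, m_2 ≥ 3 and n = m_1 + m_2 − 1. Let C_{m_1,m_2}^n be the graph obtained by identifying one vertex of the cycle C_{m_1} with one vertex of the cycle C_{m_2}. Then W(C_n) > W(C_{m_1,m_2}^n). -/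
set_option maxHeartbeats 1000000

open Finset SimpleGraph

/-- The graph C_{m₁,m₂}^n (n = m₁+m₂-1) obtained by identifying one vertex of the cycle
C_{m₁} with one vertex of the cycle C_{m₂}: the first cycle is on vertices 0,…,m₁-1 and
the second on 0, m₁, m₁+1, …, m₁+m₂-2, sharing the vertex 0. -/
def twoCycles (m₁ m₂ : ℕ) : SimpleGraph (Fin (m₁ + m₂ - 1)) :=
  SimpleGraph.fromRel (fun i j =>
    (j.val = i.val + 1 ∧ j.val < m₁) ∨ (i.val = 0 ∧ j.val = m₁ - 1) ∨
    (i.val = 0 ∧ j.val = m₁) ∨ (m₁ ≤ i.val ∧ j.val = i.val + 1) ∨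
    (i.val = 0 ∧ j.val = m₁ + m₂ - 2))

def csum (n : ℕ) : ℕ := ∑ k ∈ range n, min k (n - k)

def gf (n : ℕ) (d : Fin n) : ℕ := min d.val (n - d.val)


lemma csum_step (n : ℕ) : csum (n + 2) = csum n + n + 1 := by
  unfold csum
  rw [Finset.sum_range_succ', Finset.sum_range_succ]
  have h1 : ∀ k ∈ range n, min (k+1) (n + 2 - (k+1)) = min k (n - k) + 1 := by
    intro k hk
    rw [Finset.mem_range] at hk
    omega
  rw [Finset.sum_congr rfl h1, Finset.sum_add_distrib, Finset.sum_const, Finset.card_range]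
  simp

lemma csum_eq (n : ℕ) : 4 * csum n = n ^ 2 - n % 2 := by
  induction n using Nat.twoStepInduction with
  | zero => simp [csum]
  | one => simp [csum]
  | more n ih _ =>
    rw [csum_step, Nat.mul_add, Nat.mul_add, ih]
    have : n % 2 ≤ n ^ 2 := by nlinarith [sq_nonneg n, Nat.mod_le n 2]
    ring_nf
    omega


lemma gf_step (n : ℕ) [NeZero n] (hn : 2 ≤ n) (d e : Fin n)
    (he : e.val = 1 ∨ (-e).val = 1) : gf n (d + e) ≤ gf n d + 1 := by
  have hd := d.isLt
  have hv : (d + e).val = (d.val + e.val) % n := Fin.val_add d e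
  rcases he with he | he
  · rw [he] at hv
    by_cases h : d.val + 1 < n
    · rw [Nat.mod_eq_of_lt h] at hv
      simp only [gf, hv]; omega
    · have h2 : d.val + 1 = n := by omega
      rw [h2, Nat.mod_self] at hv
      simp only [gf, hv]; omega
  · have hne : (-e).val = (n - e.val) % n := by rw [Fin.neg_def]
    have hee := e.isLt
    have he' : e.val = n - 1 := by
      rw [hne] at he
      rcases Nat.eq_zero_or_pos e.val with h0 | h0
      · rw [h0, Nat.sub_zero, Nat.mod_self] at he; omega
      · rw [Nat.mod_eq_of_lt (by omega)] at he; omega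
    rw [he'] at hv
    by_cases h : d.val = 0
    · rw [h] at hv
      rw [Nat.mod_eq_of_lt (by omega)] at hv
      simp only [gf, hv, h]; omega
    · have h2 : d.val + (n - 1) = (d.val - 1) + n := by omega
      rw [h2, Nat.add_mod_right, Nat.mod_eq_of_lt (by omega)] at hv
      simp only [gf, hv]; omega

lemma cycle_lb (n : ℕ) [NeZero n] (hn : 2 ≤ n) (u v : Fin n) :
    gf n (v - u) ≤ (cycleGraph n).dist u v := by
  obtain ⟨p, hp⟩ := (cycleGraph_preconnected u v).exists_walk_length_eq_dist
  rw [← hp]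
  clear hp
  induction p with
  | nil => simp [gf, sub_self]
  | @cons a b c h q ih =>
    rw [Walk.length_cons]
    have key : (c - b) + (b - a) = c - a := sub_add_sub_cancel c b a
    have hadj := cycleGraph_adj'.mp h
    have he : (b - a).val = 1 ∨ (-(b - a)).val = 1 := by
      rcases hadj with h1 | h1
      · right; rw [neg_sub]; exact h1
      · left; exact h1
    calc gf n (c - a) = gf n ((c - b) + (b - a)) := by rw [key]
      _ ≤ gf n (c - b) + 1 := gf_step n hn _ _ he
      _ ≤ q.length + 1 := by omega

lemma sum_gf (n : ℕ) [NeZero n] (u : Fin n) : ∑ v : Fin n, gf n (v - u) = csum n := by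
  rw [show (∑ v : Fin n, gf n (v - u)) = ∑ v : Fin n, gf n ((Equiv.subRight u) v) from rfl,
    Equiv.sum_comp (Equiv.subRight u) (gf n)]
  exact Fin.sum_univ_eq_sum_range (fun k => min k (n - k)) n

lemma cycle_sum_lb (n : ℕ) [NeZero n] (hn : 2 ≤ n) :
    n * csum n ≤ ∑ u : Fin n, ∑ v : Fin n, (cycleGraph n).dist u v := by
  calc n * csum n = ∑ _u : Fin n, csum n := by
        rw [Finset.sum_const, Finset.card_univ, Fintype.card_fin, smul_eq_mul]
    _ ≤ _ := Finset.sum_le_sum fun u _ => by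
        rw [← sum_gf n u]
        exact Finset.sum_le_sum fun v _ => cycle_lb n hn u v


lemma row_sum (m : ℕ) [NeZero m] (i : ℕ) (hi : i < m) :
    ∑ j ∈ range m, min (Nat.dist i j) (m - Nat.dist i j) = csum m := by
  rw [← Fin.sum_univ_eq_sum_range (fun j => min (Nat.dist i j) (m - Nat.dist i j)) m]
  have termwise : ∀ j : Fin m,
      min (Nat.dist i j.val) (m - Nat.dist i j.val) = gf m (j - ⟨i, hi⟩) := by
    intro j
    have hj := j.isLt
    have hsub : (j - (⟨i, hi⟩ : Fin m)).val = (m - i + j.val) % m := by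
      rw [Fin.sub_def]
    rcases le_or_gt i j.val with h | h
    · have h2 : m - i + j.val = (j.val - i) + m := by omega
      rw [h2, Nat.add_mod_right, Nat.mod_eq_of_lt (by omega)] at hsub
      simp only [gf, hsub, Nat.dist]
      omega
    · rw [Nat.mod_eq_of_lt (by omega)] at hsub
      simp only [gf, hsub, Nat.dist]
      omega
  calc ∑ j : Fin m, min (Nat.dist i j.val) (m - Nat.dist i j.val)
      = ∑ j : Fin m, gf m (j - ⟨i, hi⟩) := Finset.sum_congr rfl fun j _ => termwise j
    _ = csum m := sum_gf m _

lemma cyc_sq (m : ℕ) [NeZero m] :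
    ∑ i ∈ range m, ∑ j ∈ range m, min (Nat.dist i j) (m - Nat.dist i j) = m * csum m := by
  rw [Finset.sum_congr rfl (fun i hi => row_sum m i (Finset.mem_range.mp hi)),
    Finset.sum_const, Finset.card_range, smul_eq_mul]


lemma csum_val_even (x : ℕ) : csum (2 * x) = x ^ 2 := by
  have h := csum_eq (2 * x)
  have h2 : (2*x) % 2 = 0 := by omega
  have h3 : (2*x)^2 = 4 * x^2 := by ring
  omega

lemma csum_val_odd (x : ℕ) : csum (2 * x + 1) = x ^ 2 + x := by
  have h := csum_eq (2 * x + 1)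
  have h2 : (2*x+1) % 2 = 1 := by omega
  have h3 : (2*x+1)^2 = 4 * (x^2 + x) + 1 := by ring
  omega

lemma arith (m₁ m₂ : ℕ) (h₁ : 3 ≤ m₁) (h₂ : 3 ≤ m₂) :
    (m₁ + 2*(m₂-1)) * csum m₁ + (2*m₁ + (m₂ - 2)) * csum m₂ + 2 ≤
      (m₁ + m₂ - 1) * csum (m₁ + m₂ - 1) := by
  have hcast : ∀ z : ℕ, ((z:ℤ))^2 = ((z^2 : ℕ) : ℤ) := by intro z; push_cast; ring
  rcases Nat.even_or_odd m₁ with ⟨x, hx⟩ | ⟨x, hx⟩ <;>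
    rcases Nat.even_or_odd m₂ with ⟨y, hy⟩ | ⟨y, hy⟩
  · have hx2 : 2 ≤ x := by omega
    have hy2 : 2 ≤ y := by omega
    have c1 : csum m₁ = x^2 := by rw [show m₁ = 2*x from by omega]; exact csum_val_even x
    have c2 : csum m₂ = y^2 := by rw [show m₂ = 2*y from by omega]; exact csum_val_even y
    have c3 : csum (m₁ + m₂ - 1) = (x+y-1)^2 + (x+y-1) := by
      rw [show m₁ + m₂ - 1 = 2*(x+y-1)+1 from by omega]; exact csum_val_odd _
    rw [c1, c2, c3]
    zify [show 1 ≤ m₂ by omega, show 2 ≤ m₂ by omega, show 1 ≤ m₁+m₂ by omega,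
      show 1 ≤ x+y by omega]
    have ex1 : (m₁:ℤ) = 2*x := by exact_mod_cast congrArg (Nat.cast (R := ℤ)) (show m₁ = 2*x by omega)
    have ex2 : (m₂:ℤ) = 2*y := by exact_mod_cast congrArg (Nat.cast (R := ℤ)) (show m₂ = 2*y by omega)
    rw [ex1, ex2]
    have hx2' : (2:ℤ) ≤ x := by exact_mod_cast hx2
    have hy2' : (2:ℤ) ≤ y := by exact_mod_cast hy2
    nlinarith [sq_nonneg ((x:ℤ) - y), sq_nonneg ((x:ℤ) + y), hx2', hy2',
      mul_le_mul hx2' hy2' (by linarith) (by linarith : (0:ℤ) ≤ x)]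
  · have hx2 : 2 ≤ x := by omega
    have hy2 : 1 ≤ y := by omega
    have c1 : csum m₁ = x^2 := by rw [show m₁ = 2*x from by omega]; exact csum_val_even x
    have c2 : csum m₂ = y^2 + y := by rw [show m₂ = 2*y+1 from by omega]; exact csum_val_odd y
    have c3 : csum (m₁ + m₂ - 1) = (x+y)^2 := by
      rw [show m₁ + m₂ - 1 = 2*(x+y) from by omega]; exact csum_val_even _
    rw [c1, c2, c3]
    zify [show 1 ≤ m₂ by omega, show 2 ≤ m₂ by omega, show 1 ≤ m₁+m₂ by omega]
    have ex1 : (m₁:ℤ) = 2*x := by exact_mod_cast congrArg (Nat.cast (R := ℤ)) (show m₁ = 2*x by omega)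
    have ex2 : (m₂:ℤ) = 2*y+1 := by exact_mod_cast congrArg (Nat.cast (R := ℤ)) (show m₂ = 2*y+1 by omega)
    rw [ex1, ex2]
    have hx2' : (2:ℤ) ≤ x := by exact_mod_cast hx2
    have hy2' : (1:ℤ) ≤ y := by exact_mod_cast hy2
    nlinarith [sq_nonneg ((x:ℤ) - y), sq_nonneg ((x:ℤ) + y), hx2', hy2',
      mul_le_mul hx2' hy2' (by linarith) (by linarith : (0:ℤ) ≤ x)]
  · have hx2 : 1 ≤ x := by omega
    have hy2 : 2 ≤ y := by omega
    have c1 : csum m₁ = x^2 + x := by rw [show m₁ = 2*x+1 from by omega]; exact csum_val_odd x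
    have c2 : csum m₂ = y^2 := by rw [show m₂ = 2*y from by omega]; exact csum_val_even y
    have c3 : csum (m₁ + m₂ - 1) = (x+y)^2 := by
      rw [show m₁ + m₂ - 1 = 2*(x+y) from by omega]; exact csum_val_even _
    rw [c1, c2, c3]
    zify [show 1 ≤ m₂ by omega, show 2 ≤ m₂ by omega, show 1 ≤ m₁+m₂ by omega]
    have ex1 : (m₁:ℤ) = 2*x+1 := by exact_mod_cast congrArg (Nat.cast (R := ℤ)) (show m₁ = 2*x+1 by omega)
    have ex2 : (m₂:ℤ) = 2*y := by exact_mod_cast congrArg (Nat.cast (R := ℤ)) (show m₂ = 2*y by omega)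
    rw [ex1, ex2]
    have hx2' : (1:ℤ) ≤ x := by exact_mod_cast hx2
    have hy2' : (2:ℤ) ≤ y := by exact_mod_cast hy2
    nlinarith [sq_nonneg ((x:ℤ) - y), sq_nonneg ((x:ℤ) + y), hx2', hy2',
      mul_le_mul hx2' hy2' (by linarith) (by linarith : (0:ℤ) ≤ x)]
  · have hx2 : 1 ≤ x := by omega
    have hy2 : 1 ≤ y := by omega
    have c1 : csum m₁ = x^2 + x := by rw [show m₁ = 2*x+1 from by omega]; exact csum_val_odd x
    have c2 : csum m₂ = y^2 + y := by rw [show m₂ = 2*y+1 from by omega]; exact csum_val_odd y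
    have c3 : csum (m₁ + m₂ - 1) = (x+y)^2 + (x+y) := by
      rw [show m₁ + m₂ - 1 = 2*(x+y)+1 from by omega]; exact csum_val_odd _
    rw [c1, c2, c3]
    zify [show 1 ≤ m₂ by omega, show 2 ≤ m₂ by omega, show 1 ≤ m₁+m₂ by omega]
    have ex1 : (m₁:ℤ) = 2*x+1 := by exact_mod_cast congrArg (Nat.cast (R := ℤ)) (show m₁ = 2*x+1 by omega)
    have ex2 : (m₂:ℤ) = 2*y+1 := by exact_mod_cast congrArg (Nat.cast (R := ℤ)) (show m₂ = 2*y+1 by omega)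
    rw [ex1, ex2]
    have hx2' : (1:ℤ) ≤ x := by exact_mod_cast hx2
    have hy2' : (1:ℤ) ≤ y := by exact_mod_cast hy2
    have k1 : (1:ℤ)*1 ≤ x*y := mul_le_mul hx2' hy2' zero_le_one (by linarith)
    have k2 : (1:ℤ)*1 ≤ (x*y)*(x+y-1) := mul_le_mul (by linarith) (by linarith) zero_le_one (by nlinarith)
    nlinarith [k2]


lemma walk_chain {V : Type*} {G : SimpleGraph V} (f : ℕ → V) :
    ∀ b a, a ≤ b → (∀ i, a ≤ i → i < b → G.Adj (f i) (f (i+1))) →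
      ∃ p : G.Walk (f a) (f b), p.length = b - a := by
  intro b
  induction b with
  | zero =>
    intro a ha _
    have h0 : a = 0 := by omega
    subst h0
    exact ⟨.nil, rfl⟩
  | succ b ih =>
    intro a ha h
    rcases Nat.eq_or_lt_of_le ha with heq | hlt
    · subst heq
      exact ⟨.nil, by simp⟩
    · obtain ⟨p, hp⟩ := ih a (by omega) (fun i h1 h2 => h i h1 (by omega))
      exact ⟨p.concat (h b (by omega) (by omega)), by rw [Walk.length_concat, hp]; omega⟩

section TwoCycles

variable (m₁ m₂ : ℕ)

local notation "N" => m₁ + m₂ - 1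

lemma adjA (h₁ : 3 ≤ m₁) (h₂ : 3 ≤ m₂) (a : ℕ) (ha : a + 1 < m₁) :
    (twoCycles m₁ m₂).Adj ⟨a, by omega⟩ ⟨a+1, by omega⟩ := by
  rw [twoCycles, SimpleGraph.fromRel_adj]
  constructor
  · simp only [ne_eq, Fin.mk.injEq]; omega
  · left; left; exact ⟨rfl, ha⟩

lemma adjB (h₁ : 3 ≤ m₁) (h₂ : 3 ≤ m₂) :
    (twoCycles m₁ m₂).Adj ⟨0, by omega⟩ ⟨m₁ - 1, by omega⟩ := by
  rw [twoCycles, SimpleGraph.fromRel_adj]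
  constructor
  · simp only [ne_eq, Fin.mk.injEq]; omega
  · left; right; left; exact ⟨rfl, rfl⟩

lemma adjC (h₁ : 3 ≤ m₁) (h₂ : 3 ≤ m₂) :
    (twoCycles m₁ m₂).Adj ⟨0, by omega⟩ ⟨m₁, by omega⟩ := by
  rw [twoCycles, SimpleGraph.fromRel_adj]
  constructor
  · simp only [ne_eq, Fin.mk.injEq]; omega
  · left; right; right; left; exact ⟨rfl, rfl⟩

lemma adjD (h₁ : 3 ≤ m₁) (h₂ : 3 ≤ m₂) (a : ℕ) (hm : m₁ ≤ a) (ha : a + 1 < N) :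
    (twoCycles m₁ m₂).Adj ⟨a, by omega⟩ ⟨a+1, by omega⟩ := by
  rw [twoCycles, SimpleGraph.fromRel_adj]
  constructor
  · simp only [ne_eq, Fin.mk.injEq]; omega
  · left; right; right; right; left; exact ⟨hm, rfl⟩

lemma adjE (h₁ : 3 ≤ m₁) (h₂ : 3 ≤ m₂) :
    (twoCycles m₁ m₂).Adj ⟨0, by omega⟩ ⟨N - 1, by omega⟩ := by
  rw [twoCycles, SimpleGraph.fromRel_adj]
  constructor
  · intro hEq
    rw [Fin.mk.injEq] at hEq
    omega
  · left; right; right; right; right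
    exact ⟨rfl, show m₁ + m₂ - 1 - 1 = m₁ + m₂ - 2 by omega⟩

/-- canonical vertex function -/
def fv (h : 0 < N) : ℕ → Fin N := fun i => ⟨i % N, Nat.mod_lt _ h⟩

lemma fv_eq (h : 0 < N) (a : ℕ) (ha : a < N) : fv m₁ m₂ h a = ⟨a, ha⟩ :=
  Fin.ext (Nat.mod_eq_of_lt ha)

lemma dchain1 (h₁ : 3 ≤ m₁) (h₂ : 3 ≤ m₂) (a b : ℕ) (hab : a ≤ b) (hb : b < m₁) :
    (twoCycles m₁ m₂).dist ⟨a, by omega⟩ ⟨b, by omega⟩ ≤ b - a := by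
  have h0 : 0 < N := by omega
  obtain ⟨p, hp⟩ := walk_chain (fv m₁ m₂ h0) b a hab (fun i hi1 hi2 => by
    rw [fv_eq m₁ m₂ h0 i (by omega), fv_eq m₁ m₂ h0 (i+1) (by omega)]
    exact adjA m₁ m₂ h₁ h₂ i (by omega))
  have hd := SimpleGraph.dist_le p
  rw [hp] at hd
  clear hp p
  rwa [fv_eq m₁ m₂ h0 a (by omega), fv_eq m₁ m₂ h0 b (by omega)] at hd

lemma dchain2 (h₁ : 3 ≤ m₁) (h₂ : 3 ≤ m₂) (a b : ℕ) (hm : m₁ ≤ a) (hab : a ≤ b)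
    (hb : b < N) :
    (twoCycles m₁ m₂).dist ⟨a, by omega⟩ ⟨b, by omega⟩ ≤ b - a := by
  have h0 : 0 < N := by omega
  obtain ⟨p, hp⟩ := walk_chain (fv m₁ m₂ h0) b a hab (fun i hi1 hi2 => by
    rw [fv_eq m₁ m₂ h0 i (by omega), fv_eq m₁ m₂ h0 (i+1) (by omega)]
    exact adjD m₁ m₂ h₁ h₂ i (by omega) (by omega))
  have hd := SimpleGraph.dist_le p
  rw [hp] at hd
  clear hp p
  rwa [fv_eq m₁ m₂ h0 a (by omega), fv_eq m₁ m₂ h0 b (by omega)] at hd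

lemma twoCycles_connected (h₁ : 3 ≤ m₁) (h₂ : 3 ≤ m₂) : (twoCycles m₁ m₂).Connected := by
  have h0 : (0:ℕ) < N := by omega
  have hreach : ∀ v : Fin N, (twoCycles m₁ m₂).Reachable ⟨0, h0⟩ v := by
    intro v
    obtain ⟨a, ha⟩ := v
    rcases lt_or_ge a m₁ with h | h
    · obtain ⟨p, -⟩ := walk_chain (fv m₁ m₂ h0) a 0 (Nat.zero_le a) (fun i hi1 hi2 => by
        rw [fv_eq m₁ m₂ h0 i (by omega), fv_eq m₁ m₂ h0 (i+1) (by omega)]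
        exact adjA m₁ m₂ h₁ h₂ i (by omega))
      have hr : (twoCycles m₁ m₂).Reachable (fv m₁ m₂ h0 0) (fv m₁ m₂ h0 a) := ⟨p⟩
      clear p
      rwa [fv_eq m₁ m₂ h0 0 h0, fv_eq m₁ m₂ h0 a ha] at hr
    · obtain ⟨p, -⟩ := walk_chain (fv m₁ m₂ h0) a m₁ h (fun i hi1 hi2 => by
        rw [fv_eq m₁ m₂ h0 i (by omega), fv_eq m₁ m₂ h0 (i+1) (by omega)]
        exact adjD m₁ m₂ h₁ h₂ i (by omega) (by omega))
      have hr : (twoCycles m₁ m₂).Reachable (fv m₁ m₂ h0 m₁) (fv m₁ m₂ h0 a) := ⟨p⟩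
      clear p
      rw [fv_eq m₁ m₂ h0 m₁ (by omega), fv_eq m₁ m₂ h0 a ha] at hr
      exact ((adjC m₁ m₂ h₁ h₂).reachable).trans hr
  rw [connected_iff]
  exact ⟨fun u v => (hreach u).symm.trans (hreach v), ⟨⟨0, h0⟩⟩⟩

def delta (i : ℕ) : ℕ :=
  if i < m₁ then min i (m₁ - i) else min (i - m₁ + 1) (m₂ - (i - m₁ + 1))

lemma dist0 (h₁ : 3 ≤ m₁) (h₂ : 3 ≤ m₂) (a : ℕ) (ha : a < N) :
    (twoCycles m₁ m₂).dist ⟨0, by omega⟩ ⟨a, ha⟩ ≤ delta m₁ m₂ a := by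
  have hconn := twoCycles_connected m₁ m₂ h₁ h₂
  rcases lt_or_ge a m₁ with h | h
  · rw [delta, if_pos h]
    refine le_min ?_ ?_
    · have := dchain1 m₁ m₂ h₁ h₂ 0 a (Nat.zero_le a) h
      simpa using this
    · calc (twoCycles m₁ m₂).dist ⟨0, by omega⟩ ⟨a, ha⟩
          ≤ (twoCycles m₁ m₂).dist ⟨0, by omega⟩ ⟨m₁ - 1, by omega⟩ +
            (twoCycles m₁ m₂).dist ⟨m₁ - 1, by omega⟩ ⟨a, ha⟩ := hconn.dist_triangle
        _ ≤ 1 + (m₁ - 1 - a) := by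
            refine add_le_add ?_ ?_
            · exact (SimpleGraph.dist_eq_one_iff_adj.mpr (adjB m₁ m₂ h₁ h₂)).le
            · rw [SimpleGraph.dist_comm]
              exact dchain1 m₁ m₂ h₁ h₂ a (m₁ - 1) (by omega) (by omega)
        _ ≤ m₁ - a := by omega
  · rw [delta, if_neg (not_lt.mpr h)]
    refine le_min ?_ ?_
    · calc (twoCycles m₁ m₂).dist ⟨0, by omega⟩ ⟨a, ha⟩
          ≤ (twoCycles m₁ m₂).dist ⟨0, by omega⟩ ⟨m₁, by omega⟩ +
            (twoCycles m₁ m₂).dist ⟨m₁, by omega⟩ ⟨a, ha⟩ := hconn.dist_triangle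
        _ ≤ 1 + (a - m₁) := by
            refine add_le_add ?_ ?_
            · exact (SimpleGraph.dist_eq_one_iff_adj.mpr (adjC m₁ m₂ h₁ h₂)).le
            · exact dchain2 m₁ m₂ h₁ h₂ m₁ a le_rfl h (by omega)
        _ ≤ a - m₁ + 1 := by omega
    · calc (twoCycles m₁ m₂).dist ⟨0, by omega⟩ ⟨a, ha⟩
          ≤ (twoCycles m₁ m₂).dist ⟨0, by omega⟩ ⟨N - 1, by omega⟩ +
            (twoCycles m₁ m₂).dist ⟨N - 1, by omega⟩ ⟨a, ha⟩ := hconn.dist_triangle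
        _ ≤ 1 + (N - 1 - a) := by
            refine add_le_add ?_ ?_
            · exact (SimpleGraph.dist_eq_one_iff_adj.mpr (adjE m₁ m₂ h₁ h₂)).le
            · rw [SimpleGraph.dist_comm]
              exact dchain2 m₁ m₂ h₁ h₂ a (N - 1) h (by omega) (by omega)
        _ ≤ m₂ - (a - m₁ + 1) := by omega

lemma pair1 (h₁ : 3 ≤ m₁) (h₂ : 3 ≤ m₂) (a b : ℕ) (hab : a ≤ b) (hb : b < m₁) :
    (twoCycles m₁ m₂).dist ⟨a, by omega⟩ ⟨b, by omega⟩ ≤ min (b - a) (m₁ - (b - a)) := by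
  have hconn := twoCycles_connected m₁ m₂ h₁ h₂
  refine le_min (dchain1 m₁ m₂ h₁ h₂ a b hab hb) ?_
  calc (twoCycles m₁ m₂).dist ⟨a, by omega⟩ ⟨b, by omega⟩
      ≤ (twoCycles m₁ m₂).dist ⟨a, by omega⟩ ⟨0, by omega⟩ +
        (twoCycles m₁ m₂).dist ⟨0, by omega⟩ ⟨b, by omega⟩ := hconn.dist_triangle
    _ ≤ a + (m₁ - b) := by
        refine add_le_add ?_ ?_
        · rw [SimpleGraph.dist_comm]
          have := dchain1 m₁ m₂ h₁ h₂ 0 a (Nat.zero_le a) (by omega)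
          simpa using this
        · exact le_trans (dist0 m₁ m₂ h₁ h₂ b (by omega))
            (by rw [delta, if_pos hb]; exact min_le_right _ _)
    _ ≤ m₁ - (b - a) := by omega

lemma pair2 (h₁ : 3 ≤ m₁) (h₂ : 3 ≤ m₂) (a b : ℕ) (hm : m₁ ≤ a) (hab : a ≤ b)
    (hb : b < N) :
    (twoCycles m₁ m₂).dist ⟨a, by omega⟩ ⟨b, by omega⟩ ≤ min (b - a) (m₂ - (b - a)) := by
  have hconn := twoCycles_connected m₁ m₂ h₁ h₂
  refine le_min (dchain2 m₁ m₂ h₁ h₂ a b hm hab hb) ?_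
  calc (twoCycles m₁ m₂).dist ⟨a, by omega⟩ ⟨b, by omega⟩
      ≤ (twoCycles m₁ m₂).dist ⟨a, by omega⟩ ⟨0, by omega⟩ +
        (twoCycles m₁ m₂).dist ⟨0, by omega⟩ ⟨b, by omega⟩ := hconn.dist_triangle
    _ ≤ (a - m₁ + 1) + (m₂ - (b - m₁ + 1)) := by
        refine add_le_add ?_ ?_
        · rw [SimpleGraph.dist_comm]
          exact le_trans (dist0 m₁ m₂ h₁ h₂ a (by omega))
            (by rw [delta, if_neg (by omega)]; exact min_le_left _ _)
        · exact le_trans (dist0 m₁ m₂ h₁ h₂ b hb)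
            (by rw [delta, if_neg (by omega)]; exact min_le_right _ _)
    _ ≤ m₂ - (b - a) := by omega

def Fub (i j : ℕ) : ℕ :=
  if i < m₁ ∧ j < m₁ then min (Nat.dist i j) (m₁ - Nat.dist i j)
  else if m₁ ≤ i ∧ m₁ ≤ j then min (Nat.dist i j) (m₂ - Nat.dist i j)
  else delta m₁ m₂ i + delta m₁ m₂ j

lemma dist_le_Fub (h₁ : 3 ≤ m₁) (h₂ : 3 ≤ m₂) (u v : Fin N) :
    (twoCycles m₁ m₂).dist u v ≤ Fub m₁ m₂ u.val v.val := by
  have hconn := twoCycles_connected m₁ m₂ h₁ h₂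
  obtain ⟨a, ha⟩ := u
  obtain ⟨b, hb⟩ := v
  rw [Fub]
  split_ifs with hc1 hc2
  · rcases le_total a b with h | h
    · rw [Nat.dist_eq_sub_of_le h]
      exact pair1 m₁ m₂ h₁ h₂ a b h hc1.2
    · rw [Nat.dist_eq_sub_of_le_right h, SimpleGraph.dist_comm]
      exact pair1 m₁ m₂ h₁ h₂ b a h hc1.1
  · rcases le_total a b with h | h
    · rw [Nat.dist_eq_sub_of_le h]
      exact pair2 m₁ m₂ h₁ h₂ a b hc2.1 h hb
    · rw [Nat.dist_eq_sub_of_le_right h, SimpleGraph.dist_comm]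
      exact pair2 m₁ m₂ h₁ h₂ b a hc2.2 h ha
  · calc (twoCycles m₁ m₂).dist ⟨a, ha⟩ ⟨b, hb⟩
        ≤ (twoCycles m₁ m₂).dist ⟨a, ha⟩ ⟨0, by omega⟩ +
          (twoCycles m₁ m₂).dist ⟨0, by omega⟩ ⟨b, hb⟩ := hconn.dist_triangle
      _ ≤ delta m₁ m₂ a + delta m₁ m₂ b := by
          refine add_le_add ?_ ?_
          · rw [SimpleGraph.dist_comm]
            exact dist0 m₁ m₂ h₁ h₂ a ha
          · exact dist0 m₁ m₂ h₁ h₂ b hb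

lemma sd1 : ∑ i ∈ range m₁, delta m₁ m₂ i = csum m₁ := by
  rw [csum]
  refine Finset.sum_congr rfl fun i hi => ?_
  rw [Finset.mem_range] at hi
  rw [delta, if_pos hi]

lemma sd2 (h₁ : 3 ≤ m₁) (h₂ : 3 ≤ m₂) : ∑ i ∈ Ico m₁ N, delta m₁ m₂ i = csum m₂ := by
  rw [Finset.sum_Ico_eq_sum_range, show N - m₁ = m₂ - 1 from by omega]
  have hc : ∀ k ∈ range (m₂ - 1), delta m₁ m₂ (m₁ + k) = min (k+1) (m₂ - (k+1)) := by
    intro k hk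
    rw [delta, if_neg (by omega), show m₁ + k - m₁ + 1 = k + 1 from by omega]
  rw [Finset.sum_congr rfl hc]
  have hpeel := Finset.sum_range_succ' (fun k => min k (m₂ - k)) (m₂ - 1)
  rw [show m₂ - 1 + 1 = m₂ from by omega] at hpeel
  rw [csum, hpeel]
  simp

lemma block22 (h₁ : 3 ≤ m₁) (h₂ : 3 ≤ m₂) :
    (∑ i ∈ Ico m₁ N, ∑ j ∈ Ico m₁ N, min (Nat.dist i j) (m₂ - Nat.dist i j))
      + 2 * csum m₂ = m₂ * csum m₂ := by
  haveI : NeZero m₂ := ⟨by omega⟩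
  have hshift : (∑ i ∈ Ico m₁ N, ∑ j ∈ Ico m₁ N, min (Nat.dist i j) (m₂ - Nat.dist i j))
      = ∑ p ∈ range (m₂ - 1), ∑ q ∈ range (m₂ - 1),
          min (Nat.dist p q) (m₂ - Nat.dist p q) := by
    rw [Finset.sum_Ico_eq_sum_range, show N - m₁ = m₂ - 1 from by omega]
    refine Finset.sum_congr rfl fun p _ => ?_
    rw [Finset.sum_Ico_eq_sum_range, show N - m₁ = m₂ - 1 from by omega]
    refine Finset.sum_congr rfl fun q _ => ?_
    have hd : Nat.dist (m₁ + p) (m₁ + q) = Nat.dist p q := by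
      simp only [Nat.dist]; omega
    rw [hd]
  rw [hshift]
  obtain ⟨k, hk⟩ : ∃ k, m₂ = k + 1 := ⟨m₂ - 1, by omega⟩
  have hcyc := cyc_sq m₂
  have hrowk := row_sum m₂ (m₂ - 1) (by omega)
  have hcolk : ∑ p ∈ range m₂, min (Nat.dist p (m₂ - 1)) (m₂ - Nat.dist p (m₂ - 1))
      = csum m₂ := by
    rw [Finset.sum_congr rfl (fun p _ => by rw [Nat.dist_comm])]
    exact row_sum m₂ (m₂ - 1) (by omega)
  rw [hk] at hcyc hrowk hcolk ⊢
  simp only [Nat.add_sub_cancel] at *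
  rw [Finset.sum_range_succ] at hcyc hcolk
  have hexp : ∀ p ∈ range k, (∑ q ∈ range (k+1), min (Nat.dist p q) (k + 1 - Nat.dist p q))
      = (∑ q ∈ range k, min (Nat.dist p q) (k + 1 - Nat.dist p q))
        + min (Nat.dist p k) (k + 1 - Nat.dist p k) := by
    intro p _
    exact Finset.sum_range_succ _ _
  rw [Finset.sum_congr rfl hexp, Finset.sum_add_distrib] at hcyc
  have hdk : Nat.dist k k = 0 := Nat.dist_self k
  rw [hdk, Nat.zero_min, add_zero] at hcolk
  linarith [hcyc, hcolk, hrowk]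

lemma sum_Fub_eq (h₁ : 3 ≤ m₁) (h₂ : 3 ≤ m₂) :
    (∑ i ∈ range N, ∑ j ∈ range N, Fub m₁ m₂ i j) + 2 * csum m₂ =
      (m₁ + 2*(m₂ - 1)) * csum m₁ + (2*m₁ + m₂) * csum m₂ := by
  haveI : NeZero m₁ := ⟨by omega⟩
  have hrow : ∀ h : ℕ → ℕ, ∑ i ∈ range N, h i
      = ∑ i ∈ range m₁, h i + ∑ i ∈ Ico m₁ N, h i := by
    intro h
    rw [Finset.range_eq_Ico,
      ← Finset.sum_Ico_consecutive h (Nat.zero_le m₁) (show m₁ ≤ N from by omega),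
      ← Finset.range_eq_Ico]
  have B11 : ∑ i ∈ range m₁, ∑ j ∈ range m₁, Fub m₁ m₂ i j = m₁ * csum m₁ := by
    rw [← cyc_sq m₁]
    refine Finset.sum_congr rfl fun i hi => Finset.sum_congr rfl fun j hj => ?_
    rw [Finset.mem_range] at hi hj
    rw [Fub, if_pos ⟨hi, hj⟩]
  have B12 : ∑ i ∈ range m₁, ∑ j ∈ Ico m₁ N, Fub m₁ m₂ i j
      = (m₂ - 1) * csum m₁ + m₁ * csum m₂ := by
    have hinner : ∀ i ∈ range m₁, ∑ j ∈ Ico m₁ N, Fub m₁ m₂ i j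
        = (m₂ - 1) * delta m₁ m₂ i + csum m₂ := by
      intro i hi
      rw [Finset.mem_range] at hi
      have hc : ∀ j ∈ Ico m₁ N, Fub m₁ m₂ i j = delta m₁ m₂ i + delta m₁ m₂ j := by
        intro j hj
        rw [Finset.mem_Ico] at hj
        rw [Fub, if_neg (by omega), if_neg (by omega)]
      rw [Finset.sum_congr rfl hc, Finset.sum_add_distrib, Finset.sum_const, Nat.card_Ico,
        sd2 m₁ m₂ h₁ h₂, smul_eq_mul, show N - m₁ = m₂ - 1 from by omega]
    rw [Finset.sum_congr rfl hinner, Finset.sum_add_distrib, Finset.sum_const,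
      Finset.card_range, ← Finset.mul_sum, sd1, smul_eq_mul]
  have B21 : ∑ i ∈ Ico m₁ N, ∑ j ∈ range m₁, Fub m₁ m₂ i j
      = m₁ * csum m₂ + (m₂ - 1) * csum m₁ := by
    have hinner : ∀ i ∈ Ico m₁ N, ∑ j ∈ range m₁, Fub m₁ m₂ i j
        = m₁ * delta m₁ m₂ i + csum m₁ := by
      intro i hi
      rw [Finset.mem_Ico] at hi
      have hc : ∀ j ∈ range m₁, Fub m₁ m₂ i j = delta m₁ m₂ i + delta m₁ m₂ j := by
        intro j hj
        rw [Finset.mem_range] at hj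
        rw [Fub, if_neg (by omega), if_neg (by omega)]
      rw [Finset.sum_congr rfl hc, Finset.sum_add_distrib, Finset.sum_const,
        Finset.card_range, sd1, smul_eq_mul]
    rw [Finset.sum_congr rfl hinner, Finset.sum_add_distrib, Finset.sum_const, Nat.card_Ico,
      ← Finset.mul_sum, sd2 m₁ m₂ h₁ h₂, smul_eq_mul, show N - m₁ = m₂ - 1 from by omega]
  have B22 : ∑ i ∈ Ico m₁ N, ∑ j ∈ Ico m₁ N, Fub m₁ m₂ i j
      = ∑ i ∈ Ico m₁ N, ∑ j ∈ Ico m₁ N, min (Nat.dist i j) (m₂ - Nat.dist i j) := by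
    refine Finset.sum_congr rfl fun i hi => Finset.sum_congr rfl fun j hj => ?_
    rw [Finset.mem_Ico] at hi hj
    rw [Fub, if_neg (by omega), if_pos ⟨hi.1, hj.1⟩]
  have hb22 := block22 m₁ m₂ h₁ h₂
  rw [hrow (fun i => ∑ j ∈ range N, Fub m₁ m₂ i j)]
  rw [Finset.sum_congr rfl (fun i (_ : i ∈ range m₁) => hrow (fun j => Fub m₁ m₂ i j)),
    Finset.sum_congr rfl (fun i (_ : i ∈ Ico m₁ N) => hrow (fun j => Fub m₁ m₂ i j))]
  rw [Finset.sum_add_distrib, Finset.sum_add_distrib, B11, B12, B21, B22]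
  have hco1 : (m₁ + 2*(m₂ - 1)) * csum m₁
      = m₁ * csum m₁ + 2 * ((m₂ - 1) * csum m₁) := by ring
  have hco2 : (2*m₁ + m₂) * csum m₂ = 2 * (m₁ * csum m₂) + m₂ * csum m₂ := by ring
  rw [hco1, hco2]
  linarith [hb22]

end TwoCycles

/-- For m₁, m₂ ≥ 3 and n = m₁ + m₂ - 1, W(C_n) > W(C_{m₁,m₂}^n). -/
theorem stmt14 (m₁ m₂ : ℕ) (h₁ : 3 ≤ m₁) (h₂ : 3 ≤ m₂) :
    wienerIndex (twoCycles m₁ m₂) <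
      wienerIndex (SimpleGraph.cycleGraph (m₁ + m₂ - 1)) := by
  haveI : NeZero (m₁ + m₂ - 1) := ⟨by omega⟩
  have hub : (∑ u : Fin (m₁ + m₂ - 1), ∑ v : Fin (m₁ + m₂ - 1), (twoCycles m₁ m₂).dist u v)
      ≤ ∑ i ∈ range (m₁ + m₂ - 1), ∑ j ∈ range (m₁ + m₂ - 1), Fub m₁ m₂ i j := by
    calc (∑ u : Fin (m₁ + m₂ - 1), ∑ v : Fin (m₁ + m₂ - 1), (twoCycles m₁ m₂).dist u v)
        ≤ ∑ u : Fin (m₁ + m₂ - 1), ∑ v : Fin (m₁ + m₂ - 1), Fub m₁ m₂ u.val v.val :=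
          Finset.sum_le_sum fun u _ => Finset.sum_le_sum fun v _ =>
            dist_le_Fub m₁ m₂ h₁ h₂ u v
      _ = ∑ i ∈ range (m₁ + m₂ - 1), ∑ j ∈ range (m₁ + m₂ - 1), Fub m₁ m₂ i j := by
          rw [← Fin.sum_univ_eq_sum_range
            (fun i => ∑ j ∈ range (m₁ + m₂ - 1), Fub m₁ m₂ i j) (m₁ + m₂ - 1)]
          exact Finset.sum_congr rfl fun u _ =>
            Fin.sum_univ_eq_sum_range (fun j => Fub m₁ m₂ u.val j) (m₁ + m₂ - 1)
  have hlb := cycle_sum_lb (m₁ + m₂ - 1) (by omega)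
  have heq := sum_Fub_eq m₁ m₂ h₁ h₂
  have harith := arith m₁ m₂ h₁ h₂
  have hco : (2*m₁ + m₂) * csum m₂ = (2*m₁ + (m₂ - 2)) * csum m₂ + 2 * csum m₂ := by
    rw [show 2*m₁ + m₂ = (2*m₁ + (m₂ - 2)) + 2 from by omega, add_mul]
  have key : (∑ u : Fin (m₁ + m₂ - 1), ∑ v : Fin (m₁ + m₂ - 1), (twoCycles m₁ m₂).dist u v) + 2
      ≤ ∑ u : Fin (m₁ + m₂ - 1), ∑ v : Fin (m₁ + m₂ - 1),
          (SimpleGraph.cycleGraph (m₁ + m₂ - 1)).dist u v := by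
    linarith [hub, hlb, heq, harith, hco]
  simp only [wienerIndex]
  generalize hA : (∑ u : Fin (m₁ + m₂ - 1), ∑ v : Fin (m₁ + m₂ - 1),
      (twoCycles m₁ m₂).dist u v) = A at key
  generalize hB : (∑ u : Fin (m₁ + m₂ - 1), ∑ v : Fin (m₁ + m₂ - 1),
      (SimpleGraph.cycleGraph (m₁ + m₂ - 1)).dist u v) = B at key
  omega
end

section
/- Let U_{n,g}^l be the unicyclic graph obtained by joining a pendant vertex of the path P_{n−g} to a vertex of the cycle C_g by an edge. If u is the pendant vertex of U_{n,g}^l and v is any non-pendant vertex, then D(u) > D(v). -/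
open Finset SimpleGraph

/-- The lollipop U_{n,g}^l: a cycle on vertices 0,…,g-1 with the path g,…,n-1 attached
by the edge {0, g}; the vertex n-1 is its unique pendant vertex. -/
def lollipop (n g : ℕ) : SimpleGraph (Fin n) :=
  SimpleGraph.fromRel (fun i j =>
    (j.val = i.val + 1 ∧ j.val < g) ∨ (i.val = 0 ∧ j.val = g - 1) ∨
    (i.val = 0 ∧ j.val = g) ∨ (g ≤ i.val ∧ j.val = i.val + 1))

/-!
Distances in U_{n,g}^l have an explicit closed form `lollipopDist`; it is the graph distance
because it changes by at most one along an edge and every vertex other than the target has a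
neighbour strictly closer to it. For a vertex `a` on the path, the reflection of the segment
`a, …, n-1` shows that the vertices from `a` on contribute equally to `D(a)` and `D(n-1)`, while
every vertex before `a` is strictly closer to `a`. For a vertex at distance `c` from the
attachment vertex `0` on the cycle, the cycle contributes equally to both sums by rotation; the
remaining terms are `(n-g)(c+1) + T` for `D(a)` against `g(n-g) + T` for `D(n-1)`, with
`T = 0 + 1 + ⋯ + (n-g-1)`, and `c + 1 < g` because `c ≤ g/2` and `g ≥ 3`.
-/

theorem SimpleGraph.Walk.le_add_length {V : Type*} {G : SimpleGraph V} (f : V → ℕ)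
    (hle : ∀ x z, G.Adj x z → f x ≤ f z + 1) {x y : V} (w : G.Walk x y) :
    f x ≤ f y + w.length := by
  induction w with
  | nil => simp
  | cons hadj p ih => have := hle _ _ hadj; rw [Walk.length_cons]; omega

theorem SimpleGraph.dist_eq_of_descent {V : Type*} {G : SimpleGraph V} {y : V} (f : V → ℕ)
    (hy : f y = 0) (hle : ∀ x z, G.Adj x z → f x ≤ f z + 1)
    (hdesc : ∀ x, x ≠ y → ∃ z, G.Adj x z ∧ f z < f x) (x : V) :
    G.dist x y = f x := by
  have walk_le : ∀ k x, f x = k → ∃ w : G.Walk x y, w.length ≤ k := by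
    intro k
    induction k using Nat.strong_induction_on with
    | _ k ih =>
      intro x hx
      by_cases hxy : x = y
      · subst hxy; exact ⟨Walk.nil, Nat.zero_le _⟩
      · obtain ⟨z, hadj, hlt⟩ := hdesc x hxy
        obtain ⟨w, hw⟩ := ih (f z) (hx ▸ hlt) z rfl
        exact ⟨Walk.cons hadj w, by have := hle x z hadj; simp only [Walk.length_cons]; omega⟩
  obtain ⟨w, hw⟩ := walk_le (f x) x rfl
  obtain ⟨p, hp⟩ := w.reachable.exists_walk_length_eq_dist
  refine le_antisymm ((dist_le w).trans hw) ?_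
  simpa [hy, hp] using p.le_add_length f hle

def cycleDist (g a b : ℕ) : ℕ := min (max a b - min a b) (g - (max a b - min a b))

def lollipopDist (g a b : ℕ) : ℕ :=
  if a < g then
    if b < g then cycleDist g a b
    else min a (g - a) + (b - g + 1)
  else
    if b < g then min b (g - b) + (a - g + 1)
    else max a b - min a b

def lollipopStep (g a b : ℕ) : ℕ :=
  if g ≤ a then
    if a < b then a + 1 else if a = g then 0 else a - 1
  else if g ≤ b then
    if a = 0 then g else if 2 * a ≤ g then a - 1 else if a + 1 < g then a + 1 else 0
  else if a < b then
    if 2 * (b - a) ≤ g then a + 1 else if a = 0 then g - 1 else a - 1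
  else
    if 2 * (a - b) ≤ g then a - 1 else if a + 1 < g then a + 1 else 0

section Lollipop

variable {n g : ℕ}

lemma lollipop_adj_iff (x y : Fin n) :
    (lollipop n g).Adj x y ↔ x ≠ y ∧
      (((y.val = x.val + 1 ∧ y.val < g) ∨ (x.val = 0 ∧ y.val = g - 1) ∨
        (x.val = 0 ∧ y.val = g) ∨ (g ≤ x.val ∧ y.val = x.val + 1)) ∨
       ((x.val = y.val + 1 ∧ x.val < g) ∨ (y.val = 0 ∧ x.val = g - 1) ∨
        (y.val = 0 ∧ x.val = g) ∨ (g ≤ y.val ∧ x.val = y.val + 1))) :=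
  fromRel_adj ..

lemma lollipopDist_le_of_adj {x z : Fin n} (h : (lollipop n g).Adj x z)
    (b : ℕ) : lollipopDist g x b ≤ lollipopDist g z b + 1 := by
  obtain ⟨-, hrel⟩ := (lollipop_adj_iff x z).1 h
  simp only [lollipopDist, cycleDist]
  rcases hrel with (h | h | h | h) | (h | h | h | h) <;> split_ifs <;> omega

lemma lollipopStep_lt (hn : g < n) {a b : ℕ} (ha : a < n) (hb : b < n) :
    lollipopStep g a b < n := by
  simp only [lollipopStep]; split_ifs <;> omega

lemma lollipop_adj_step (hn : g < n) {x y : Fin n} (hxy : x ≠ y) :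
    (lollipop n g).Adj x ⟨lollipopStep g x y, lollipopStep_lt hn x.isLt y.isLt⟩ := by
  have hne : x.val ≠ y.val := Fin.val_ne_of_ne hxy
  rw [lollipop_adj_iff, ne_eq, Fin.ext_iff]
  simp only [lollipopStep]; split_ifs <;> omega

lemma lollipopDist_step_lt {a b : ℕ} (hab : a ≠ b) :
    lollipopDist g (lollipopStep g a b) b < lollipopDist g a b := by
  simp only [lollipopDist, lollipopStep, cycleDist]; split_ifs <;> omega

theorem dist_lollipop (hn : g < n) (x y : Fin n) :
    (lollipop n g).dist x y = lollipopDist g x y := by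
  refine dist_eq_of_descent (fun x : Fin n => lollipopDist g x y) ?_
    (fun x z h => lollipopDist_le_of_adj h y) (fun x hxy => ⟨_, lollipop_adj_step hn hxy,
      lollipopDist_step_lt (Fin.val_ne_of_ne hxy)⟩) x
  simp only [lollipopDist, cycleDist]; split_ifs <;> omega

lemma distSum_lollipop (hn : g < n) (x : Fin n) :
    distSum (lollipop n g) x = ∑ k ∈ range n, lollipopDist g x k := by
  rw [distSum, ← Fin.sum_univ_eq_sum_range (lollipopDist g x)]
  exact sum_congr rfl fun y _ => dist_lollipop hn x y

lemma sum_range_cycleDist_eq (a : ℕ) (ha : a < g) :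
    ∑ k ∈ range g, cycleDist g a k = ∑ k ∈ range g, cycleDist g 0 k := by
  refine sum_nbij' (fun k => if k < a then k + g - a else k - a)
    (fun k => if k < g - a then k + a else k + a - g) ?_ ?_ ?_ ?_ ?_ <;>
    intro k hk <;> simp only [mem_range, cycleDist] at hk ⊢ <;>
    split_ifs <;> omega

lemma sum_lollipopDist_of_lt_girth {a : ℕ} (ha : a < g) (hn : g ≤ n) :
    ∑ k ∈ range n, lollipopDist g a k =
      ∑ k ∈ range g, cycleDist g 0 k + (n - g) * (min a (g - a) + 1) +
        ∑ k ∈ range (n - g), k := by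
  obtain ⟨m, rfl⟩ := Nat.exists_eq_add_of_le hn
  rw [sum_range_add, ← sum_range_cycleDist_eq a ha, add_assoc, Nat.add_sub_cancel_left]
  congr 1
  · exact sum_congr rfl fun k hk => by simp only [mem_range] at hk; simp [lollipopDist, ha, hk]
  · have path : ∀ k ∈ range m, lollipopDist g a (g + k) = (min a (g - a) + 1) + k := by
      intro k _; simp only [lollipopDist]; split_ifs <;> omega
    rw [sum_congr rfl path, sum_add_distrib, sum_const, card_range, smul_eq_mul, mul_comm]

lemma sum_lollipopDist_last (hn : g < n) :
    ∑ k ∈ range n, lollipopDist g (n - 1) k =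
      ∑ k ∈ range g, cycleDist g 0 k + g * (n - g) + ∑ k ∈ range (n - g), k := by
  obtain ⟨m, rfl⟩ := Nat.exists_eq_add_of_le hn.le
  have hm : 0 < m := by omega
  have cycle : ∀ k ∈ range g, lollipopDist g (g + m - 1) k = cycleDist g 0 k + m := by
    intro k hk
    simp only [mem_range] at hk
    simp only [lollipopDist, cycleDist]; split_ifs <;> omega
  have path : ∀ k ∈ range m, lollipopDist g (g + m - 1) (g + k) = m - 1 - k := by
    intro k hk; simp only [mem_range] at hk; simp only [lollipopDist]; split_ifs <;> omega
  rw [sum_range_add, Nat.add_sub_cancel_left, sum_congr rfl cycle, sum_congr rfl path,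
    sum_range_reflect (fun k => k) m, sum_add_distrib, sum_const, card_range, smul_eq_mul]

lemma sum_lollipopDist_lt_of_lt_girth (hg : 3 ≤ g) (hn : g < n) {a : ℕ} (ha : a < g) :
    ∑ k ∈ range n, lollipopDist g a k < ∑ k ∈ range n, lollipopDist g (n - 1) k := by
  rw [sum_lollipopDist_of_lt_girth ha hn.le, sum_lollipopDist_last hn]
  have : (n - g) * (min a (g - a) + 1) < g * (n - g) :=
    mul_comm g (n - g) ▸ Nat.mul_lt_mul_of_pos_left (by omega) (by omega)
  omega

lemma sum_lollipopDist_lt_of_girth_le (hg : 0 < g) {a : ℕ} (hga : g ≤ a) (ha : a < n - 1) :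
    ∑ k ∈ range n, lollipopDist g a k < ∑ k ∈ range n, lollipopDist g (n - 1) k := by
  obtain ⟨r, rfl⟩ := Nat.exists_eq_add_of_le (show a ≤ n by omega)
  have below :
      ∑ k ∈ range a, lollipopDist g a k < ∑ k ∈ range a, lollipopDist g (a + r - 1) k :=
    sum_lt_sum_of_nonempty (nonempty_range_iff.2 (by omega)) fun k hk => by
      simp only [mem_range] at hk; simp only [lollipopDist]; split_ifs <;> omega
  have above : ∑ k ∈ range r, lollipopDist g a (a + k) =
      ∑ k ∈ range r, lollipopDist g (a + r - 1) (a + k) := by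
    have up : ∀ k ∈ range r, lollipopDist g a (a + k) = k := by
      intro k _; simp only [lollipopDist]; split_ifs <;> omega
    have down : ∀ k ∈ range r, lollipopDist g (a + r - 1) (a + k) = r - 1 - k := by
      intro k hk; simp only [mem_range] at hk; simp only [lollipopDist]; split_ifs <;> omega
    rw [sum_congr rfl up, sum_congr rfl down, sum_range_reflect (fun k => k) r]
  rw [sum_range_add, sum_range_add, above]
  omega

end Lollipop

/-- In the lollipop U_{n,g}^l, the pendant vertex has strictly larger distance sum than
every non-pendant vertex. -/
theorem stmt15 (n g : ℕ) (hg : 3 ≤ g) (hn : g < n) (v : Fin n) (hv : v.val ≠ n - 1) :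
    distSum (lollipop n g) v <
      distSum (lollipop n g) (⟨n - 1, by omega⟩ : Fin n) := by
  rw [distSum_lollipop hn, distSum_lollipop hn]
  rcases lt_or_ge v.val g with hvg | hvg
  · exact sum_lollipopDist_lt_of_lt_girth hg hn hvg
  · exact sum_lollipopDist_lt_of_girth_le (by omega) hvg (by omega)
end

section
/- The Wiener index of U_{n,3}^l, the lollipop graph consisting of a triangle with a path of n−3 vertices attached, equals (n^3 − 7n + 12)/6. -/
open Finset SimpleGraph

/-- Distance to vertex 0 in U_{n,3}. -/
def lolf (i : ℕ) : ℕ := if i = 0 then 0 else if i ≤ 2 then 1 else i - 2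

/-- Explicit distance function of U_{n,3}. -/
def lold (i j : ℕ) : ℕ :=
  if i ≤ 2 ∧ j ≤ 2 then (if i = j then 0 else 1)
  else if i ≤ 2 ∨ j ≤ 2 then lolf i + lolf j
  else (i - j) + (j - i)

/-- The base relation of the lollipop, on ℕ. -/
def lolrel (i j : ℕ) : Prop :=
  (j = i + 1 ∧ j < 3) ∨ (i = 0 ∧ j = 2) ∨ (i = 0 ∧ j = 3) ∨ (3 ≤ i ∧ j = i + 1)

lemma lollipop_adj {n : ℕ} (u v : Fin n) :
    (lollipop n 3).Adj u v ↔
      u.val ≠ v.val ∧ (lolrel u.val v.val ∨ lolrel v.val u.val) := by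
  simp only [lollipop, SimpleGraph.fromRel_adj, lolrel, Ne, Fin.ext_iff]

lemma lold_self (i : ℕ) : lold i i = 0 := by
  unfold lold lolf; split_ifs <;> first | contradiction | omega

lemma lold_symm (i j : ℕ) : lold i j = lold j i := by
  unfold lold lolf; split_ifs <;> first | contradiction | omega

lemma lold_eq_zero {i j : ℕ} (h : lold i j = 0) : i = j := by
  unfold lold lolf at h; split_ifs at h <;> omega

set_option maxHeartbeats 1000000 in
lemma lold_lip {a b : ℕ} (h : lolrel a b ∨ lolrel b a) (c : ℕ) :
    lold a c ≤ lold b c + 1 := by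
  unfold lolrel at h
  unfold lold lolf
  split_ifs <;> first | contradiction | omega

set_option maxHeartbeats 4000000 in
lemma step_nat (n : ℕ) (hn : 4 ≤ n) (u v : ℕ) (hu : u < n) (hv : v < n) (hne : u ≠ v) :
    ∃ w, w < n ∧ w ≠ v ∧ (lolrel v w ∨ lolrel w v) ∧ lold u w + 1 = lold u v := by
  refine ⟨if v ≤ 2 then (if u ≤ 2 then u else if v = 0 then 3 else 0)
    else if 3 ≤ u ∧ v < u then v + 1 else if v = 3 then 0 else v - 1,
    ?_, ?_, ?_, ?_⟩
  · split_ifs <;> first | contradiction | omega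
  · split_ifs <;> first | contradiction | omega
  · unfold lolrel; split_ifs <;> first | contradiction | omega
  · unfold lold lolf; split_ifs <;> first | contradiction | omega

lemma lold_le_walk {n : ℕ} {u v : Fin n} (p : (lollipop n 3).Walk u v) :
    lold u.val v.val ≤ p.length := by
  induction p with
  | nil => simp [lold_self]
  | cons h q ih =>
    rw [lollipop_adj] at h
    simp only [SimpleGraph.Walk.length_cons]
    exact (lold_lip h.2 _).trans (Nat.add_le_add_right ih 1)

lemma exists_walk {n : ℕ} (hn : 4 ≤ n) (u v : Fin n) :
    ∃ p : (lollipop n 3).Walk u v, p.length = lold u.val v.val := by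
  generalize hk : lold u.val v.val = k
  induction k using Nat.strong_induction_on generalizing v with
  | _ k ih =>
    rcases Nat.eq_zero_or_pos k with rfl | hk0
    · have : u = v := Fin.ext (lold_eq_zero hk)
      subst this
      exact ⟨.nil, by simpa using hk.symm⟩
    · have hne : u.val ≠ v.val := fun he => by
        rw [show v = u from (Fin.ext he.symm)] at hk
        rw [lold_self] at hk; omega
      obtain ⟨w, hwn, hwv, hrel, heq⟩ :=
        step_nat n hn u.val v.val u.isLt v.isLt hne
      have hadj : (lollipop n 3).Adj (⟨w, hwn⟩ : Fin n) v := by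
        rw [lollipop_adj]
        exact ⟨hwv, hrel.symm.imp id id⟩
      obtain ⟨p, hp⟩ := ih (lold u.val w) (by omega) ⟨w, hwn⟩ rfl
      exact ⟨p.concat hadj, by rw [SimpleGraph.Walk.length_concat, hp]; omega⟩

lemma lollipop_dist {n : ℕ} (hn : 4 ≤ n) (u v : Fin n) :
    (lollipop n 3).dist u v = lold u.val v.val := by
  obtain ⟨p, hp⟩ := exists_walk hn u v
  refine le_antisymm (hp ▸ SimpleGraph.dist_le p) ?_
  have hr : (lollipop n 3).Reachable u v := ⟨p⟩
  obtain ⟨q, hq⟩ := hr.exists_walk_length_eq_dist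
  exact hq ▸ lold_le_walk q

lemma lold_succ_col {j n : ℕ} (hj : j < n) (hn : 4 ≤ n) :
    lold j (n + 1) = lold j n + 1 := by
  unfold lold lolf; split_ifs <;> first | contradiction | omega

lemma sum_col (n : ℕ) (hn : 4 ≤ n) :
    2 * (∑ j ∈ Finset.range n, lold j n) + 2 = n * (n + 1) := by
  induction n, hn using Nat.le_induction with
  | base => decide
  | succ n hn ih =>
    rw [Finset.sum_range_succ]
    have h1 : ∑ j ∈ Finset.range n, lold j (n + 1)
        = (∑ j ∈ Finset.range n, lold j n) + n := by
      calc ∑ j ∈ Finset.range n, lold j (n + 1)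
          = ∑ j ∈ Finset.range n, (lold j n + 1) :=
            Finset.sum_congr rfl fun j hj =>
              lold_succ_col (Finset.mem_range.mp hj) hn
        _ = (∑ j ∈ Finset.range n, lold j n) + n := by
            rw [Finset.sum_add_distrib, Finset.sum_const, Finset.card_range,
              smul_eq_mul, mul_one]
    have h2 : lold n (n + 1) = 1 := by unfold lold lolf; split_ifs <;> first | contradiction | omega
    have h3 := ih
    nlinarith [h1, h2, h3]

lemma sum_lold (n : ℕ) (hn : 4 ≤ n) :
    3 * (∑ i ∈ Finset.range n, ∑ j ∈ Finset.range n, lold i j) + 7 * n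
      = n ^ 3 + 12 := by
  induction n, hn using Nat.le_induction with
  | base => decide
  | succ n hn ih =>
    have hrow : ∑ j ∈ Finset.range n, lold n j = ∑ j ∈ Finset.range n, lold j n :=
      Finset.sum_congr rfl fun j _ => lold_symm n j
    have hsplit : (∑ i ∈ Finset.range (n+1), ∑ j ∈ Finset.range (n+1), lold i j)
        = (∑ i ∈ Finset.range n, ∑ j ∈ Finset.range n, lold i j)
          + 2 * (∑ j ∈ Finset.range n, lold j n) := by
      rw [Finset.sum_range_succ]
      simp_rw [Finset.sum_range_succ]
      rw [Finset.sum_add_distrib, hrow, lold_self]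
      ring
    have hcol := sum_col n hn
    have hcube : (n + 1) ^ 3 = n ^ 3 + 3 * n ^ 2 + 3 * n + 1 := by ring
    have hsq : n * (n + 1) = n ^ 2 + n := by ring
    rw [hsplit]
    linarith [ih, hcol]

/-- The Wiener index of the lollipop U_{n,3}^l equals (n³ - 7n + 12)/6. -/
theorem stmt16 (n : ℕ) (hn : 4 ≤ n) :
    wienerIndex (lollipop n 3) = (n ^ 3 - 7 * n + 12) / 6 := by
  have hsum : (∑ u : Fin n, ∑ v : Fin n, (lollipop n 3).dist u v)
      = ∑ i ∈ Finset.range n, ∑ j ∈ Finset.range n, lold i j := by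
    have h1 : ∀ u : Fin n, (∑ v : Fin n, (lollipop n 3).dist u v)
        = ∑ j ∈ Finset.range n, lold u.val j := by
      intro u
      have := Fin.sum_univ_eq_sum_range (fun j => lold u.val j) n
      rw [← this]
      exact Finset.sum_congr rfl fun v _ => lollipop_dist hn u v
    simp_rw [h1]
    exact Fin.sum_univ_eq_sum_range (fun i => ∑ j ∈ Finset.range n, lold i j) n
  unfold wienerIndex
  rw [hsum]
  have key := sum_lold n hn
  have h7 : 7 * n ≤ n ^ 3 := by
    have h16 : 16 ≤ n ^ 2 := by nlinarith
    have h2 : 16 * n ≤ n ^ 2 * n := Nat.mul_le_mul_right n h16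
    have h3 : n ^ 2 * n = n ^ 3 := by ring
    linarith
  set m := n ^ 3 with hm
  omega
end

section
/- For 0 ≤ k ≤ n−3, every connected graph G on n vertices with exactly k vertices of degree 1 satisfies W(G) ≥ W(P_n^k) = binomial(n−k,2) + k^2 + 2k(n−k−1), with equality if and only if G is isomorphic to P_n^k. -/
open Finset SimpleGraph

/-- The graph P_n^k: a clique on the vertices 0,…,n-k-1 together with k pendant vertices
n-k,…,n-1 all attached to the clique vertex 0. -/
def cliqueWithPendants (n k : ℕ) : SimpleGraph (Fin n) :=
  SimpleGraph.fromRel (fun i j =>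
    (i.val < n - k ∧ j.val < n - k) ∨ (i.val = 0 ∧ n - k ≤ j.val))

set_option linter.unusedSectionVars false

section AuxBasic
variable {V : Type*} [Fintype V] [DecidableEq V]

/-- lower bound function for distances in a connected graph -/
def low (G : SimpleGraph V) [DecidableRel G.Adj] (u v : V) : ℕ :=
  if u = v then 0 else if G.Adj u v then 1 else 2

lemma low_le_dist {G : SimpleGraph V} [DecidableRel G.Adj] (hG : G.Connected) (u v : V) :
    low G u v ≤ G.dist u v := by
  unfold low
  split_ifs with h1 h2
  · exact Nat.zero_le _
  · exact hG.pos_dist_of_ne h1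
  · rcases Nat.lt_or_ge (G.dist u v) 2 with h | h
    · interval_cases hd : G.dist u v
      · exact absurd (hG.dist_eq_zero_iff.mp hd) h1
      · exact absurd (dist_eq_one_iff_adj.mp hd) h2
    · exact h

lemma degree_eq_sum (G : SimpleGraph V) [DecidableRel G.Adj] (u : V) :
    G.degree u = ∑ v, if G.Adj u v then 1 else 0 := by
  rw [degree, neighborFinset_eq_filter, Finset.sum_boole]
  simp

lemma sum_ite_ne' {s : Finset V} {u : V} (hu : u ∈ s) (m : ℕ) :
    (∑ v ∈ s, if u = v then 0 else m) = (s.card - 1) * m := by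
  rw [← Finset.sum_erase_add _ _ hu, if_pos rfl, add_zero]
  have : ∀ v ∈ s.erase u, (if u = v then 0 else m) = m := by
    intro v hv
    rw [if_neg (Ne.symm (Finset.mem_erase.mp hv).1)]
  rw [Finset.sum_congr rfl this, Finset.sum_const, Finset.card_erase_of_mem hu, smul_eq_mul]

lemma sum_low_add_degree (G : SimpleGraph V) [DecidableRel G.Adj] (u : V) :
    (∑ v, low G u v) + G.degree u = (Fintype.card V - 1) * 2 := by
  rw [degree_eq_sum, ← Finset.sum_add_distrib, ← card_univ, ← sum_ite_ne' (mem_univ u) 2]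
  apply Finset.sum_congr rfl
  intro v _
  unfold low
  by_cases h1 : u = v
  · subst h1; simp
  · simp only [if_neg h1]
    by_cases h2 : G.Adj u v <;> simp [h2]

lemma sum_low_deg_total (G : SimpleGraph V) [DecidableRel G.Adj] :
    (∑ u : V, ∑ v, low G u v) + ∑ u : V, G.degree u
      = Fintype.card V * ((Fintype.card V - 1) * 2) := by
  rw [← Finset.sum_add_distrib, Finset.sum_congr rfl (fun u _ => sum_low_add_degree G u),
    Finset.sum_const, card_univ, smul_eq_mul]

lemma even_sumsum (f : V → V → ℕ) (hs : ∀ u v, f u v = f v u) (hd : ∀ u, f u u = 0) :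
    Even (∑ u, ∑ v, f u v) := by
  classical
  have key : ∀ s : Finset V, Even (∑ u ∈ s, ∑ v ∈ s, f u v) := by
    intro s
    induction s using Finset.induction_on with
    | empty => simp
    | @insert a s ha ih =>
      rw [Finset.sum_insert ha]
      rw [Finset.sum_insert ha]
      have : ∀ u ∈ s, ∑ v ∈ insert a s, f u v = f u a + ∑ v ∈ s, f u v :=
        fun u _ => Finset.sum_insert ha
      rw [Finset.sum_congr rfl this, Finset.sum_add_distrib, hd a]
      have : ∑ u ∈ s, f u a = ∑ v ∈ s, f a v := Finset.sum_congr rfl (fun u _ => hs u a)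
      rw [this]
      obtain ⟨c, hc⟩ := ih
      exact ⟨∑ v ∈ s, f a v + c, by omega⟩
  exact key univ

end AuxBasic

section AuxIso
variable {V W : Type*} {G : SimpleGraph V} {H : SimpleGraph W}

lemma iso_dist_le (e : G ≃g H) (u v : V) : H.dist (e u) (e v) ≤ G.dist u v := by
  by_cases hr : G.Reachable u v
  · obtain ⟨p, hp⟩ := hr.exists_walk_length_eq_dist
    calc H.dist (e u) (e v) ≤ (p.map e.toHom).length := dist_le _
    _ = p.length := p.length_map _
    _ = G.dist u v := hp
  · rw [dist_eq_zero_of_not_reachable hr]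
    have : ¬ H.Reachable (e u) (e v) := by
      intro h
      have := h.map e.symm.toHom
      exact hr (by simpa using this)
    rw [dist_eq_zero_of_not_reachable this]

lemma iso_dist (e : G ≃g H) (u v : V) : G.dist u v = H.dist (e u) (e v) := by
  refine le_antisymm ?_ (iso_dist_le e u v)
  have := iso_dist_le e.symm (e u) (e v)
  simpa using this

lemma wiener_iso [Fintype V] [Fintype W] (e : G ≃g H) : wienerIndex G = wienerIndex H := by
  unfold wienerIndex
  congr 1
  have : ∀ u : V, ∑ v : V, G.dist u v = ∑ v : W, H.dist (e u) v := by
    intro u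
    rw [← Equiv.sum_comp e.toEquiv (fun v => H.dist (e u) v)]
    exact Finset.sum_congr rfl fun v _ => iso_dist e u v
  rw [Finset.sum_congr rfl (fun u _ => this u),
    ← Equiv.sum_comp e.toEquiv (fun u => ∑ v : W, H.dist u v)]
  rfl

end AuxIso

section AuxDeg
variable {V : Type*} [Fintype V] [DecidableEq V]

lemma pendant_unique {G : SimpleGraph V} [DecidableRel G.Adj] {v : V}
    (hv : G.degree v = 1) : ∃ w, ∀ u, (G.Adj v u ↔ u = w) := by
  obtain ⟨w, hw⟩ := Finset.card_eq_one.mp hv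
  exact ⟨w, fun u => by rw [← mem_neighborFinset, hw, Finset.mem_singleton]⟩

lemma deg_sum_analysis (G : SimpleGraph V) [DecidableRel G.Adj] (k : ℕ)
    (hpend : (univ.filter fun v => G.degree v = 1).card = k) :
    (∑ u, G.degree u) ≤
      ((univ.filter fun v => ¬ G.degree v = 1).card *
        ((univ.filter fun v => ¬ G.degree v = 1).card - 1) + 2 * k) ∧
    ((∑ u, G.degree u) = ((univ.filter fun v => ¬ G.degree v = 1).card *
        ((univ.filter fun v => ¬ G.degree v = 1).card - 1) + 2 * k) →
      (∀ u v : V, ¬ G.degree u = 1 → ¬ G.degree v = 1 → u ≠ v → G.Adj u v) ∧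
      (∀ v : V, G.degree v = 1 → ∃ u, ¬ G.degree u = 1 ∧ G.Adj u v)) := by
  classical
  set P := univ.filter fun v : V => G.degree v = 1 with hPdef
  set Q := univ.filter fun v : V => ¬ G.degree v = 1 with hQdef
  set a : V → V → ℕ := fun u v => if G.Adj u v then 1 else 0 with ha
  have hsplit : (∑ u, G.degree u) =
      k + ((∑ v ∈ P, ∑ u ∈ Q, a u v) + ∑ u ∈ Q, ∑ v ∈ Q, a u v) := by
    rw [← Finset.sum_filter_add_sum_filter_not univ (fun v => G.degree v = 1)
      (fun u => G.degree u)]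
    have h1 : ∑ u ∈ P, G.degree u = k := by
      rw [← hpend]
      rw [Finset.sum_congr rfl (fun u hu => (Finset.mem_filter.mp hu).2), Finset.sum_const,
        smul_eq_mul, mul_one, hpend]
    have h2 : ∑ u ∈ Q, G.degree u = (∑ v ∈ P, ∑ u ∈ Q, a u v) + ∑ u ∈ Q, ∑ v ∈ Q, a u v := by
      have : ∀ u ∈ Q, G.degree u = (∑ v ∈ P, a u v) + ∑ v ∈ Q, a u v := by
        intro u _
        rw [degree_eq_sum, ← Finset.sum_filter_add_sum_filter_not univ (fun v => G.degree v = 1)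
          (fun v => a u v)]
      rw [Finset.sum_congr rfl this, Finset.sum_add_distrib, Finset.sum_comm]
    rw [h1, h2]
  have hT1le : ∀ v ∈ P, (∑ u ∈ Q, a u v) ≤ 1 := by
    intro v hv
    have hdeg : G.degree v = 1 := (Finset.mem_filter.mp hv).2
    calc (∑ u ∈ Q, a u v) ≤ ∑ u : V, a u v :=
          Finset.sum_le_sum_of_subset (Finset.filter_subset _ _)
    _ = ∑ u : V, (if G.Adj v u then 1 else 0) := by
          exact Finset.sum_congr rfl fun u _ => by simp [ha, adj_comm]
    _ = G.degree v := (degree_eq_sum G v).symm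
    _ = 1 := hdeg
  have hT1 : (∑ v ∈ P, ∑ u ∈ Q, a u v) ≤ k := by
    calc (∑ v ∈ P, ∑ u ∈ Q, a u v) ≤ ∑ v ∈ P, 1 := Finset.sum_le_sum hT1le
    _ = k := by rw [Finset.sum_const, smul_eq_mul, mul_one, hpend]
  have hT2le : ∀ u ∈ Q, (∑ v ∈ Q, a u v) ≤ Q.card - 1 := by
    intro u hu
    calc (∑ v ∈ Q, a u v) ≤ ∑ v ∈ Q, (if u = v then 0 else 1) := by
          apply Finset.sum_le_sum
          intro v _
          by_cases h : u = v
          · subst h; simp [ha, SimpleGraph.irrefl]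
          · simp only [ha, if_neg h]; split_ifs <;> omega
    _ = Q.card - 1 := by rw [sum_ite_ne' hu 1, mul_one]
  have hT2 : (∑ u ∈ Q, ∑ v ∈ Q, a u v) ≤ Q.card * (Q.card - 1) := by
    calc (∑ u ∈ Q, ∑ v ∈ Q, a u v) ≤ ∑ u ∈ Q, (Q.card - 1) := Finset.sum_le_sum hT2le
    _ = Q.card * (Q.card - 1) := by rw [Finset.sum_const, smul_eq_mul]
  constructor
  · omega
  · intro heq
    have hT1eq : (∑ v ∈ P, ∑ u ∈ Q, a u v) = k := by omega
    have hT2eq : (∑ u ∈ Q, ∑ v ∈ Q, a u v) = Q.card * (Q.card - 1) := by omega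
    constructor
    · intro u v hu hv huv
      have h1 : (∑ u ∈ Q, ∑ v ∈ Q, a u v) = ∑ u ∈ Q, (Q.card - 1) := by
        rw [hT2eq, Finset.sum_const, smul_eq_mul]
      have h2 := (Finset.sum_eq_sum_iff_of_le hT2le).mp h1
      have huQ : u ∈ Q := Finset.mem_filter.mpr ⟨mem_univ u, hu⟩
      have hvQ : v ∈ Q := Finset.mem_filter.mpr ⟨mem_univ v, hv⟩
      have h3 := h2 u huQ
      have h4 : (∑ v ∈ Q, a u v) = ∑ v ∈ Q, (if u = v then 0 else 1) := by
        rw [h3, sum_ite_ne' huQ 1, mul_one]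
      have h5 : ∀ v ∈ Q, a u v ≤ (if u = v then 0 else 1) := by
        intro v _
        by_cases h : u = v
        · subst h; simp [ha, SimpleGraph.irrefl]
        · simp only [ha, if_neg h]; split_ifs <;> omega
      have h6 := (Finset.sum_eq_sum_iff_of_le h5).mp h4
      have h7 := h6 v hvQ
      simp only [ha, if_neg huv] at h7
      by_contra hadj
      rw [if_neg hadj] at h7
      exact absurd h7 (by norm_num)
    · intro v hv
      have hvP : v ∈ P := Finset.mem_filter.mpr ⟨mem_univ v, hv⟩
      have h1 : (∑ v ∈ P, ∑ u ∈ Q, a u v) = ∑ v ∈ P, 1 := by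
        rw [hT1eq, Finset.sum_const, smul_eq_mul, mul_one, hpend]
      have h2 := (Finset.sum_eq_sum_iff_of_le hT1le).mp h1
      have h3 := h2 v hvP
      have h4 : ∃ u ∈ Q, a u v ≠ 0 := by
        by_contra hc
        push_neg at hc
        have : (∑ u ∈ Q, a u v) = 0 := Finset.sum_eq_zero fun u hu => hc u hu
        omega
      obtain ⟨u, hu, hau⟩ := h4
      refine ⟨u, (Finset.mem_filter.mp hu).2, ?_⟩
      by_contra hadj
      simp [ha, hadj] at hau

end AuxDeg

section AuxTarget

instance (n k : ℕ) : DecidableRel (cliqueWithPendants n k).Adj := fun i j =>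
  decidable_of_iff' _ (SimpleGraph.fromRel_adj _ i j)

lemma target_adj {n k : ℕ} (i j : Fin n) :
    (cliqueWithPendants n k).Adj i j ↔ i ≠ j ∧
      ((i.val < n - k ∧ j.val < n - k) ∨ (i.val = 0 ∧ n - k ≤ j.val) ∨
       (j.val = 0 ∧ n - k ≤ i.val)) := by
  rw [cliqueWithPendants, SimpleGraph.fromRel_adj]
  constructor
  · rintro ⟨h1, h2⟩
    exact ⟨h1, by tauto⟩
  · rintro ⟨h1, h2⟩
    exact ⟨h1, by tauto⟩

lemma target_adj_zero {n k : ℕ} (hk : k + 3 ≤ n) {z : Fin n} (hz : z.val = 0)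
    (j : Fin n) (hj : j ≠ z) : (cliqueWithPendants n k).Adj z j := by
  rw [target_adj]
  refine ⟨Ne.symm hj, ?_⟩
  have hjz : j.val ≠ 0 := by
    intro h
    exact hj (Fin.ext (by omega))
  rcases Nat.lt_or_ge j.val (n - k) with h | h
  · left; constructor <;> omega
  · right; left; omega

lemma target_connected {n k : ℕ} (hk : k + 3 ≤ n) : (cliqueWithPendants n k).Connected := by
  have hn : 0 < n := by omega
  set z : Fin n := ⟨0, hn⟩ with hz
  have hzv : z.val = 0 := rfl
  rw [SimpleGraph.connected_iff]
  constructor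
  · intro u v
    have hu : (cliqueWithPendants n k).Reachable u z := by
      by_cases h : u = z
      · rw [h]
      · exact ((target_adj_zero hk hzv u h)).symm.reachable
    have hv : (cliqueWithPendants n k).Reachable z v := by
      by_cases h : v = z
      · rw [h]
      · exact (target_adj_zero hk hzv v h).reachable
    exact hu.trans hv
  · exact ⟨z⟩

lemma target_dist_two {n k : ℕ} (hk : k + 3 ≤ n) (u v : Fin n) (huv : u ≠ v)
    (hadj : ¬ (cliqueWithPendants n k).Adj u v) :
    (cliqueWithPendants n k).dist u v = 2 := by
  have hn : 0 < n := by omega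
  set z : Fin n := ⟨0, hn⟩ with hz
  have hzv : z.val = 0 := rfl
  have hu0 : u ≠ z := by
    rintro rfl
    exact hadj (target_adj_zero hk hzv v (Ne.symm huv))
  have hv0 : v ≠ z := by
    rintro rfl
    exact hadj ((target_adj_zero hk hzv u hu0).symm)
  have h1 : (cliqueWithPendants n k).Adj u z := (target_adj_zero hk hzv u hu0).symm
  have h2 : (cliqueWithPendants n k).Adj z v := target_adj_zero hk hzv v hv0
  have hle : (cliqueWithPendants n k).dist u v ≤ 2 := by
    have := SimpleGraph.dist_le (Walk.cons h1 (Walk.cons h2 Walk.nil))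
    simpa using this
  have hpos : 0 < (cliqueWithPendants n k).dist u v :=
    (target_connected hk).pos_dist_of_ne huv
  have hne1 : (cliqueWithPendants n k).dist u v ≠ 1 := by
    intro h
    exact hadj (dist_eq_one_iff_adj.mp h)
  omega

lemma card_filter_lt {n c : ℕ} (hcn : c ≤ n) :
    (univ.filter fun j : Fin n => j.val < c).card = c := by
  have : (univ.filter fun j : Fin n => j.val < c) = Finset.map (Fin.castLEEmb hcn) univ := by
    ext j
    rw [Finset.mem_filter, Finset.mem_map]
    constructor
    · rintro ⟨-, h⟩
      exact ⟨⟨j.val, h⟩, mem_univ _, by ext; simp⟩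
    · rintro ⟨i, -, rfl⟩
      exact ⟨mem_univ _, by simpa using i.isLt⟩
  rw [this, Finset.card_map, card_univ, Fintype.card_fin]

lemma card_filter_ge {n c : ℕ} (hcn : c ≤ n) :
    (univ.filter fun j : Fin n => c ≤ j.val).card = n - c := by
  have h := Finset.card_filter_add_card_filter_not (s := (univ : Finset (Fin n)))
    (p := fun j : Fin n => j.val < c)
  rw [card_filter_lt hcn, card_univ, Fintype.card_fin] at h
  have : (univ.filter fun j : Fin n => c ≤ j.val) =
      (univ.filter fun j : Fin n => ¬ j.val < c) := by
    apply Finset.filter_congr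
    intro j _
    simp only [not_lt, eq_iff_iff]
  rw [this]
  omega

lemma target_deg_sum {n k : ℕ} (hk : k + 3 ≤ n) :
    ∑ i : Fin n, (cliqueWithPendants n k).degree i = (n-k)*(n-k-1) + 2*k := by
  set c := n - k with hc
  have hcn : c ≤ n := by omega
  have hc3 : 3 ≤ c := by omega
  have key : ∀ i j : Fin n, (if (cliqueWithPendants n k).Adj i j then (1:ℕ) else 0) =
      (if (¬ i.val = j.val ∧ i.val < c ∧ j.val < c) then 1 else 0) +
      (if (i.val = 0 ∧ c ≤ j.val) then 1 else 0) +
      (if (j.val = 0 ∧ c ≤ i.val) then 1 else 0) := by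
    intro i j
    have hA := target_adj (n := n) (k := k) i j
    have hij : (i ≠ j) ↔ ¬(i.val = j.val) := by rw [Ne, Fin.ext_iff]
    rw [hij] at hA
    by_cases h : (cliqueWithPendants n k).Adj i j
    · rw [if_pos h]
      rw [hA] at h
      split_ifs <;> omega
    · rw [if_neg h]
      rw [hA] at h
      split_ifs <;> omega
  have hsum : ∑ i : Fin n, (cliqueWithPendants n k).degree i =
      (∑ i : Fin n, ∑ j : Fin n, if (¬ i.val = j.val ∧ i.val < c ∧ j.val < c) then (1:ℕ) else 0) +
      (∑ i : Fin n, ∑ j : Fin n, if (i.val = 0 ∧ c ≤ j.val) then (1:ℕ) else 0) +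
      (∑ i : Fin n, ∑ j : Fin n, if (j.val = 0 ∧ c ≤ i.val) then (1:ℕ) else 0) := by
    rw [← Finset.sum_add_distrib, ← Finset.sum_add_distrib]
    apply Finset.sum_congr rfl
    intro i _
    rw [degree_eq_sum, ← Finset.sum_add_distrib, ← Finset.sum_add_distrib]
    exact Finset.sum_congr rfl fun j _ => key i j
  have hS2inner : ∀ i : Fin n, (∑ j : Fin n, if (i.val = 0 ∧ c ≤ j.val) then (1:ℕ) else 0) =
      if i.val = 0 then k else 0 := by
    intro i
    by_cases h : i.val = 0
    · rw [if_pos h]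
      have : ∀ j : Fin n, (if (i.val = 0 ∧ c ≤ j.val) then (1:ℕ) else 0) =
          if c ≤ j.val then 1 else 0 := fun j => by simp [h]
      rw [Finset.sum_congr rfl fun j _ => this j, Finset.sum_boole, card_filter_ge hcn]
      simp only [Nat.cast_id]
      omega
    · rw [if_neg h]
      exact Finset.sum_eq_zero fun j _ => by simp [h]
  have hzcard : (univ.filter fun i : Fin n => i.val = 0).card = 1 := by
    have : (univ.filter fun i : Fin n => i.val = 0) = {(⟨0, by omega⟩ : Fin n)} := by
      ext i
      simp [Fin.ext_iff]
    rw [this, Finset.card_singleton]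
  have hS2 : (∑ i : Fin n, ∑ j : Fin n, if (i.val = 0 ∧ c ≤ j.val) then (1:ℕ) else 0) = k := by
    rw [Finset.sum_congr rfl fun i _ => hS2inner i]
    have : ∀ i : Fin n, (if i.val = 0 then (k:ℕ) else 0) = k * (if i.val = 0 then 1 else 0) :=
      fun i => by split_ifs <;> ring
    rw [Finset.sum_congr rfl fun i _ => this i, ← Finset.mul_sum, Finset.sum_boole, hzcard]
    simp
  have hS3 : (∑ i : Fin n, ∑ j : Fin n, if (j.val = 0 ∧ c ≤ i.val) then (1:ℕ) else 0) = k := by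
    rw [Finset.sum_comm]
    rw [Finset.sum_congr rfl fun j _ => hS2inner j]
    have h2 : ∀ i : Fin n, (if i.val = 0 then (k:ℕ) else 0) = k * (if i.val = 0 then 1 else 0) :=
      fun i => by split_ifs <;> ring
    rw [Finset.sum_congr rfl fun i _ => h2 i, ← Finset.mul_sum, Finset.sum_boole, hzcard]
    simp
  have hS1inner : ∀ i : Fin n,
      (∑ j : Fin n, if (¬ i.val = j.val ∧ i.val < c ∧ j.val < c) then (1:ℕ) else 0) =
      if i.val < c then c - 1 else 0 := by
    intro i
    by_cases h : i.val < c
    · rw [if_pos h]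
      have step : ∀ j : Fin n, (if (¬ i.val = j.val ∧ i.val < c ∧ j.val < c) then (1:ℕ) else 0) =
          if (j.val < c ∧ ¬ j.val = i.val) then 1 else 0 := by
        intro j
        split_ifs <;> omega
      rw [Finset.sum_congr rfl fun j _ => step j, Finset.sum_boole]
      have : (univ.filter fun j : Fin n => j.val < c ∧ ¬ j.val = i.val) =
          ((univ.filter fun j : Fin n => j.val < c).erase i) := by
        ext j
        simp only [Finset.mem_filter, mem_univ, true_and, Finset.mem_erase, ne_eq, Fin.ext_iff]
        tauto
      rw [this, Finset.card_erase_of_mem (by simp [h]), card_filter_lt hcn]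
      simp
    · rw [if_neg h]
      exact Finset.sum_eq_zero fun j _ => by
        rw [if_neg]
        omega
  have hS1 : (∑ i : Fin n, ∑ j : Fin n,
      if (¬ i.val = j.val ∧ i.val < c ∧ j.val < c) then (1:ℕ) else 0) = c * (c - 1) := by
    rw [Finset.sum_congr rfl fun i _ => hS1inner i]
    have : ∀ i : Fin n, (if i.val < c then (c-1:ℕ) else 0) = (c-1) * (if i.val < c then 1 else 0) :=
      fun i => by split_ifs <;> ring
    rw [Finset.sum_congr rfl fun i _ => this i, ← Finset.mul_sum, Finset.sum_boole,
      card_filter_lt hcn]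
    push_cast
    ring
  rw [hsum, hS1, hS2, hS3, add_assoc]
  congr 1
  omega

end AuxTarget

lemma build_iso {V : Type*} [Fintype V] [DecidableEq V] {G : SimpleGraph V}
    {n k : ℕ} (hk : k + 3 ≤ n) (hcard : Fintype.card V = n)
    (P : Finset V) (hPcard : P.card = k) (w : V) (hw : w ∉ P)
    (hQadj : ∀ u v : V, u ∉ P → v ∉ P → u ≠ v → G.Adj u v)
    (hPnb : ∀ v ∈ P, ∀ u, G.Adj v u ↔ u = w) :
    Nonempty (G ≃g cliqueWithPendants n k) := by
  classical
  set c := n - k with hc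
  have hc3 : 3 ≤ c := by omega
  have hck : c + k = n := by omega
  set Q : Finset V := (univ \ P).erase w with hQ
  have hwQ : w ∈ univ \ P := by simp [hw]
  have hQcard : Q.card = c - 1 := by
    rw [hQ, Finset.card_erase_of_mem hwQ, Finset.card_sdiff_of_subset (Finset.subset_univ P),
      card_univ, hcard, hPcard]
  have hbnd1 : ∀ (x : V) (hx : x ∈ P), c + (P.equivFin ⟨x, hx⟩).val < n := by
    intro x hx
    have := (P.equivFin ⟨x, hx⟩).isLt
    omega
  have hbnd2 : ∀ (x : V) (hx : x ∈ Q), 1 + (Q.equivFin ⟨x, hx⟩).val < n := by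
    intro x hx
    have := (Q.equivFin ⟨x, hx⟩).isLt
    omega
  set f : V → Fin n := fun x =>
    if hx : x ∈ P then ⟨c + (P.equivFin ⟨x, hx⟩).val, hbnd1 x hx⟩
    else if hxw : x = w then ⟨0, by omega⟩
    else ⟨1 + (Q.equivFin ⟨x, by simp [hQ, hxw, hx]⟩).val, hbnd2 x (by simp [hQ, hxw, hx])⟩
    with hf
  have hfP : ∀ (x : V) (hx : x ∈ P),
      f x = ⟨c + (P.equivFin ⟨x, hx⟩).val, hbnd1 x hx⟩ := by
    intro x hx
    simp [hf, hx]
  have hfw : f w = ⟨0, by omega⟩ := by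
    simp [hf, hw]
  have hfQ : ∀ (x : V) (hx : x ∈ Q),
      f x = ⟨1 + (Q.equivFin ⟨x, hx⟩).val, hbnd2 x hx⟩ := by
    intro x hx
    have h1 : x ∉ P := by
      intro h
      exact (Finset.mem_sdiff.mp (Finset.mem_of_mem_erase hx)).2 h
    have h2 : x ≠ w := Finset.ne_of_mem_erase hx
    simp [hf, h1, h2]
  have hrangeP : ∀ (x : V), x ∈ P → c ≤ (f x).val ∧ (f x).val < n := by
    intro x hx
    rw [hfP x hx]
    have h := (P.equivFin ⟨x, hx⟩).isLt
    simp only [Fin.val_mk]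
    omega
  have hrangeQ : ∀ (x : V), x ∈ Q → 1 ≤ (f x).val ∧ (f x).val < c := by
    intro x hx
    rw [hfQ x hx]
    have h := (Q.equivFin ⟨x, hx⟩).isLt
    simp only [Fin.val_mk]
    omega
  have hcases : ∀ x : V, x ∈ P ∨ x = w ∨ x ∈ Q := by
    intro x
    by_cases h1 : x ∈ P
    · exact Or.inl h1
    by_cases h2 : x = w
    · exact Or.inr (Or.inl h2)
    · exact Or.inr (Or.inr (by simp [hQ, h1, h2]))
  have hinj : Function.Injective f := by
    intro u v huv
    rcases hcases u with hu | hu | hu <;> rcases hcases v with hv | hv | hv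
    · rw [hfP u hu, hfP v hv, Fin.mk.injEq] at huv
      have : P.equivFin ⟨u, hu⟩ = P.equivFin ⟨v, hv⟩ := Fin.ext (by omega)
      have h2 := P.equivFin.injective this
      exact congrArg Subtype.val h2
    · exfalso
      have h1 := hrangeP u hu
      rw [hv, hfw] at huv
      rw [huv] at h1
      simp at h1
      omega
    · exfalso
      have h1 := hrangeP u hu
      have h2 := hrangeQ v hv
      rw [huv] at h1
      omega
    · exfalso
      have h1 := hrangeP v hv
      rw [hu, hfw] at huv
      rw [← huv] at h1
      simp at h1
      omega
    · rw [hu, hv]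
    · exfalso
      have h2 := hrangeQ v hv
      rw [hu, hfw] at huv
      rw [← huv] at h2
      simp at h2
    · exfalso
      have h1 := hrangeQ u hu
      have h2 := hrangeP v hv
      rw [huv] at h1
      omega
    · exfalso
      have h1 := hrangeQ u hu
      rw [hv, hfw] at huv
      rw [huv] at h1
      simp at h1
    · rw [hfQ u hu, hfQ v hv, Fin.mk.injEq] at huv
      have : Q.equivFin ⟨u, hu⟩ = Q.equivFin ⟨v, hv⟩ := Fin.ext (by omega)
      have h2 := Q.equivFin.injective this
      exact congrArg Subtype.val h2
  have hbij : Function.Bijective f := by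
    rw [Fintype.bijective_iff_injective_and_card]
    exact ⟨hinj, by rw [hcard, Fintype.card_fin]⟩
  refine ⟨⟨Equiv.ofBijective f hbij, ?_⟩⟩
  intro u v
  show (cliqueWithPendants n k).Adj (f u) (f v) ↔ G.Adj u v
  by_cases huv : u = v
  · subst huv
    simp [SimpleGraph.irrefl]
  have hfne : f u ≠ f v := fun e => huv (hinj e)
  rcases hcases u with hu | hu | hu <;> rcases hcases v with hv | hv | hv
  · have hG : ¬ G.Adj u v := by
      rw [hPnb u hu v]
      intro h
      rw [h] at hv
      exact hw hv
    have h1 := hrangeP u hu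
    have h2 := hrangeP v hv
    rw [target_adj]
    simp only [hG, iff_false]
    rintro ⟨-, hd⟩
    omega
  · have hG : G.Adj u v := (hPnb u hu v).mpr hv
    have h1 := hrangeP u hu
    have h2 : (f v).val = 0 := by rw [hv, hfw]
    rw [target_adj]
    simp only [hG, iff_true]
    exact ⟨hfne, by omega⟩
  · have hvP : v ∉ P := by
      intro h
      exact (Finset.mem_sdiff.mp (Finset.mem_of_mem_erase hv)).2 h
    have hG : ¬ G.Adj u v := by
      rw [hPnb u hu v]
      intro h
      exact (Finset.ne_of_mem_erase hv) h
    have h1 := hrangeP u hu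
    have h2 := hrangeQ v hv
    rw [target_adj]
    simp only [hG, iff_false]
    rintro ⟨-, hd⟩
    omega
  · have hG : G.Adj u v := ((hPnb v hv u).mpr hu).symm
    have h1 : (f u).val = 0 := by rw [hu, hfw]
    have h2 := hrangeP v hv
    rw [target_adj]
    simp only [hG, iff_true]
    exact ⟨hfne, by omega⟩
  · exact absurd (hu.trans hv.symm) huv
  · have hvP : v ∉ P := by
      intro h
      exact (Finset.mem_sdiff.mp (Finset.mem_of_mem_erase hv)).2 h
    have hG : G.Adj u v := hQadj u v (by rw [hu]; exact hw) hvP huv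
    have h1 : (f u).val = 0 := by rw [hu, hfw]
    have h2 := hrangeQ v hv
    rw [target_adj]
    simp only [hG, iff_true]
    exact ⟨hfne, by omega⟩
  · have huP : u ∉ P := by
      intro h
      exact (Finset.mem_sdiff.mp (Finset.mem_of_mem_erase hu)).2 h
    have hG : ¬ G.Adj u v := by
      intro h
      exact (Finset.ne_of_mem_erase hu) ((hPnb v hv u).mp h.symm)
    have h1 := hrangeQ u hu
    have h2 := hrangeP v hv
    rw [target_adj]
    simp only [hG, iff_false]
    rintro ⟨-, hd⟩
    omega
  · have huP : u ∉ P := by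
      intro h
      exact (Finset.mem_sdiff.mp (Finset.mem_of_mem_erase hu)).2 h
    have hG : G.Adj u v := hQadj u v huP (by rw [hv]; exact hw) huv
    have h1 := hrangeQ u hu
    have h2 : (f v).val = 0 := by rw [hv, hfw]
    rw [target_adj]
    simp only [hG, iff_true]
    exact ⟨hfne, by omega⟩
  · have huP : u ∉ P := by
      intro h
      exact (Finset.mem_sdiff.mp (Finset.mem_of_mem_erase hu)).2 h
    have hvP : v ∉ P := by
      intro h
      exact (Finset.mem_sdiff.mp (Finset.mem_of_mem_erase hv)).2 h
    have hG : G.Adj u v := hQadj u v huP hvP huv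
    have h1 := hrangeQ u hu
    have h2 := hrangeQ v hv
    rw [target_adj]
    simp only [hG, iff_true]
    exact ⟨hfne, by omega⟩

/-- For 0 ≤ k ≤ n-3, every connected graph on n vertices with exactly k pendant vertices
has Wiener index at least W(P_n^k) = C(n-k,2) + k² + 2k(n-k-1), with equality iff the
graph is isomorphic to P_n^k. -/
theorem stmt18 {V : Type*} [Fintype V] [DecidableEq V] (n k : ℕ) (hk : k + 3 ≤ n)
    (G : SimpleGraph V) [DecidableRel G.Adj] (hcard : Fintype.card V = n)
    (hG : G.Connected)
    (hpend : (Finset.univ.filter fun v => G.degree v = 1).card = k) :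
    wienerIndex (cliqueWithPendants n k) ≤ wienerIndex G ∧
    (wienerIndex G = wienerIndex (cliqueWithPendants n k) ↔
      Nonempty (G ≃g cliqueWithPendants n k)) ∧
    wienerIndex (cliqueWithPendants n k) =
      (n - k).choose 2 + k ^ 2 + 2 * k * (n - k - 1) := by
  classical
  -- target graph distances equal `low`
  have hHdist : ∀ i j : Fin n, (cliqueWithPendants n k).dist i j
      = low (cliqueWithPendants n k) i j := by
    intro i j
    unfold low
    split_ifs with h1 h2
    · rw [h1, dist_self]
    · exact dist_eq_one_iff_adj.mpr h2
    · exact target_dist_two hk i j h1 h2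
  -- exact value equation for the target
  have hSH : (∑ i : Fin n, ∑ j : Fin n, (cliqueWithPendants n k).dist i j)
      + ((n-k)*(n-k-1) + 2*k) = n * ((n-1)*2) := by
    have h1 : (∑ i : Fin n, ∑ j : Fin n, (cliqueWithPendants n k).dist i j)
        = ∑ i : Fin n, ∑ j : Fin n, low (cliqueWithPendants n k) i j :=
      Finset.sum_congr rfl (fun i _ => Finset.sum_congr rfl (fun j _ => hHdist i j))
    rw [h1, ← target_deg_sum hk]
    have h2 := sum_low_deg_total (cliqueWithPendants n k)
    rw [Fintype.card_fin] at h2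
    exact h2
  -- lower bound for G
  have hsumG := sum_low_deg_total G
  rw [hcard] at hsumG
  have hlowle : (∑ u : V, ∑ v : V, low G u v) ≤ ∑ u : V, ∑ v : V, G.dist u v :=
    Finset.sum_le_sum fun u _ => Finset.sum_le_sum fun v _ => low_le_dist hG u v
  have hQc : (univ.filter fun v : V => ¬ G.degree v = 1).card = n - k := by
    have h := Finset.card_filter_add_card_filter_not (s := (univ : Finset V))
      (p := fun v : V => G.degree v = 1)
    rw [hpend, card_univ, hcard] at h
    omega
  have hdegle := (deg_sum_analysis G k hpend).1
  rw [hQc] at hdegle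
  have hmainle : (∑ i : Fin n, ∑ j : Fin n, (cliqueWithPendants n k).dist i j)
      ≤ ∑ u : V, ∑ v : V, G.dist u v := by omega
  -- the value formula
  obtain ⟨d, hd⟩ : ∃ d, n - k = d + 3 := ⟨n - k - 3, by omega⟩
  have hn : n = d + 3 + k := by omega
  have hn1 : n - 1 = d + 2 + k := by omega
  have hnk1 : n - k - 1 = d + 2 := by omega
  have hdvd : 2 ∣ (d+3) * (d+2) := by
    have h := Nat.even_mul_succ_self (d+2)
    rw [show d + 2 + 1 = d + 3 from rfl] at h
    exact (by rwa [mul_comm] at h : Even ((d+3)*(d+2))).two_dvd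
  have hch2 : 2 * ((d+3).choose 2) = (d+3)*(d+2) := by
    have e1 : d + 3 - 1 = d + 2 := by omega
    rw [Nat.choose_two_right, e1, Nat.mul_div_cancel' hdvd]
  have hSHval : (∑ i : Fin n, ∑ j : Fin n, (cliqueWithPendants n k).dist i j)
      = 2 * ((n-k).choose 2 + k^2 + 2*k*(n-k-1)) := by
    have hSH3 := hSH
    have hv1 : n * ((n-1)*2) = (d+3+k) * ((d+2+k)*2) := by
      rw [hn1, show n = d+3+k from hn]
    rw [hv1, hnk1, hd] at hSH3
    have hiden : (d+3+k) * ((d+2+k)*2)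
        = ((d+3)*(d+2) + 2*k) + (2*((d+3).choose 2) + 2*(k*k) + 2*(2*k*(d+2))) := by
      rw [hch2]; ring
    rw [hiden] at hSH3
    have hfin : (∑ i : Fin n, ∑ j : Fin n, (cliqueWithPendants n k).dist i j)
        = 2*((d+3).choose 2) + 2*(k*k) + 2*(2*k*(d+2)) := by omega
    rw [hnk1, hd, hfin]
    ring
  refine ⟨?_, ?_, ?_⟩
  · exact Nat.div_le_div_right hmainle
  · constructor
    · intro hWeq
      -- sums are equal
      have hevG : Even (∑ u : V, ∑ v : V, G.dist u v) :=
        even_sumsum _ (fun u v => SimpleGraph.dist_comm) (fun u => SimpleGraph.dist_self)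
      have hevH : Even (∑ i : Fin n, ∑ j : Fin n, (cliqueWithPendants n k).dist i j) :=
        even_sumsum _ (fun u v => SimpleGraph.dist_comm) (fun u => SimpleGraph.dist_self)
      have h1 : (∑ u : V, ∑ v : V, G.dist u v) / 2
          = (∑ i : Fin n, ∑ j : Fin n, (cliqueWithPendants n k).dist i j) / 2 := hWeq
      rw [Nat.even_iff] at hevG hevH
      have hSeq : (∑ u : V, ∑ v : V, G.dist u v)
          = ∑ i : Fin n, ∑ j : Fin n, (cliqueWithPendants n k).dist i j := by omega
      have hdegeq : (∑ u : V, G.degree u) = (n-k)*(n-k-1) + 2*k := by omega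
      have hloweq : (∑ u : V, ∑ v : V, low G u v) = ∑ u : V, ∑ v : V, G.dist u v := by omega
      have hdl : ∀ u v : V, low G u v = G.dist u v := by
        intro u v
        have ha := (Finset.sum_eq_sum_iff_of_le
          (fun u (_ : u ∈ (univ : Finset V)) =>
            Finset.sum_le_sum (fun v _ => low_le_dist hG u v))).mp hloweq
        have hb := (Finset.sum_eq_sum_iff_of_le
          (fun v (_ : v ∈ (univ : Finset V)) => low_le_dist hG u v)).mp (ha u (mem_univ u))
        exact hb v (mem_univ v)
      have hdist2 : ∀ u v : V, u ≠ v → ¬ G.Adj u v → G.dist u v = 2 := by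
        intro u v h1' h2'
        rw [← hdl]
        unfold low
        rw [if_neg h1', if_neg h2']
      obtain ⟨hQadj, hPnbr⟩ := (deg_sum_analysis G k hpend).2 (by rw [hQc]; exact hdegeq)
      set P : Finset V := univ.filter (fun v => G.degree v = 1) with hPdef
      have hmemP : ∀ x : V, x ∈ P ↔ G.degree x = 1 := fun x => by simp [hPdef]
      by_cases hk0 : k = 0
      · have hPempty : P = ∅ := Finset.card_eq_zero.mp (by rw [hpend, hk0])
        have hVne : Nonempty V := by
          have : 0 < Fintype.card V := by omega
          exact Fintype.card_pos_iff.mp this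
        obtain ⟨w⟩ := hVne
        exact build_iso hk hcard P hpend w (by rw [hPempty]; exact Finset.notMem_empty w)
          (fun u v hu hv huv =>
            hQadj u v (fun h => hu ((hmemP u).mpr h)) (fun h => hv ((hmemP v).mpr h)) huv)
          (fun v hv => absurd hv (by rw [hPempty]; exact Finset.notMem_empty v))
      · have hPne : P.Nonempty := Finset.card_pos.mp (by rw [hpend]; omega)
        obtain ⟨p0, hp0⟩ := hPne
        have hp0deg : G.degree p0 = 1 := (hmemP p0).mp hp0
        obtain ⟨w, hwspec⟩ := pendant_unique hp0deg
        have hwdeg : ¬ G.degree w = 1 := by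
          obtain ⟨u0, hu0deg, hu0adj⟩ := hPnbr p0 hp0deg
          have : u0 = w := (hwspec u0).mp hu0adj.symm
          rw [← this]; exact hu0deg
        have hwP : w ∉ P := fun h => hwdeg ((hmemP w).mp h)
        have hPnb : ∀ v ∈ P, ∀ u, G.Adj v u ↔ u = w := by
          intro v hv u
          have hvdeg := (hmemP v).mp hv
          obtain ⟨x, hxspec⟩ := pendant_unique hvdeg
          suffices hxw : x = w by rw [hxspec u, hxw]
          by_cases hvp0 : v = p0
          · subst hvp0
            have h1' : G.Adj v w := (hwspec w).mpr rfl
            exact ((hxspec w).mp h1').symm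
          · have hnadj : ¬ G.Adj p0 v := by
              intro h
              have hvw := (hwspec v).mp h
              rw [hvw] at hv
              exact hwP hv
            have hdist : G.dist p0 v = 2 := hdist2 p0 v (fun e => hvp0 e.symm) hnadj
            obtain ⟨p, hp⟩ := hG.exists_walk_length_eq_dist p0 v
            rw [hdist] at hp
            have h01 : G.Adj p0 (p.getVert 1) := by
              have := p.adj_getVert_succ (i := 0) (by omega)
              simpa using this
            have h12 : G.Adj (p.getVert 1) v := by
              have ha := p.adj_getVert_succ (i := 1) (by omega)
              have h2' : p.getVert 2 = v := by
                have hb := p.getVert_length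
                rw [hp] at hb
                exact hb
              rwa [h2'] at ha
            have hmw : p.getVert 1 = w := (hwspec _).mp h01
            have hmx : p.getVert 1 = x := (hxspec _).mp h12.symm
            rw [← hmx, hmw]
        exact build_iso hk hcard P hpend w hwP
          (fun u v hu hv huv =>
            hQadj u v (fun h => hu ((hmemP u).mpr h)) (fun h => hv ((hmemP v).mpr h)) huv)
          hPnb
    · rintro ⟨e⟩
      exact wiener_iso e
  · show (∑ i : Fin n, ∑ j : Fin n, (cliqueWithPendants n k).dist i j) / 2 = _
    rw [hSHval]
    exact Nat.mul_div_cancel_left _ (by norm_num)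
end
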